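/- arXiv:1902.10620 — 5 statements merged into one kernel-verified Lean document; each statement's English description precedes it below -/
import Mathlib

section
/- Let X and Y be Banach spaces, let d ≥ 1, and let K : ℝ^d × ℝ^d → 𝓛(X,Y) be strongly measurable and satisfy the (ω,2)-Dini condition for a modulus ω with Dini constant ‖ω‖. Then there exists a constant C depending only on d such that K satisfies the 2-Hörmander condition with constant C·‖ω‖; that is, for every ball B(c,r) ⊆ ℝ^d one has (∫_{ℝ^d∖B(c,r)} ‖K(s,t)−K(s',t)‖² dt)^{1/2} ≤ C‖ω‖ for all s, s' ∈ B(c,r/2), and (∫_{ℝ^d∖B(c,r)} ‖K(s,t)−K(s,t')‖² ds)^{1/2} ≤ C‖ω‖ for all t, t' ∈ B(c,r/2). -/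
open MeasureTheory ENNReal Metric Set

noncomputable section

/-- `ℝ^d` with the Euclidean norm (and Lebesgue measure). -/
abbrev Ed (d : ℕ) : Type := EuclideanSpace ℝ (Fin d)

/-- Strong measurability of an operator-valued kernel: `(s,t) ↦ K s t x` is strongly
measurable for every `x`. -/
def smK {d : ℕ} {X Y : Type} [NormedAddCommGroup X] [NormedSpace ℝ X]
    [NormedAddCommGroup Y] [NormedSpace ℝ Y]
    (K : Ed d → Ed d → (X →L[ℝ] Y)) : Prop :=
  ∀ x : X, StronglyMeasurable (fun p : Ed d × Ed d => K p.1 p.2 x)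

/-- The square function `S_K f (s) = (∫ ‖K(s,t) f(t)‖² dt)^{1/2}`, valued in `ℝ≥0∞`. -/
def sqFn {d : ℕ} {X Y : Type} [NormedAddCommGroup X] [NormedSpace ℝ X]
    [NormedAddCommGroup Y] [NormedSpace ℝ Y]
    (K : Ed d → Ed d → (X →L[ℝ] Y)) (f : Ed d → X) (s : Ed d) : ℝ≥0∞ :=
  (∫⁻ t, (‖K s t (f t)‖₊ : ℝ≥0∞) ^ (2:ℝ)) ^ ((1:ℝ)/2)

/-- Weak `L^p` boundedness of the square function operator, with constant `A`:
`λ·|{S_K f > λ}|^{1/p} ≤ A‖f‖_{L^p}`. -/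
def weakBdd {d : ℕ} {X Y : Type} [NormedAddCommGroup X] [NormedSpace ℝ X]
    [NormedAddCommGroup Y] [NormedSpace ℝ Y]
    (K : Ed d → Ed d → (X →L[ℝ] Y)) (p A : ℝ) : Prop :=
  ∀ f : Ed d → X, AEStronglyMeasurable f volume → ∀ lam : ℝ, 0 < lam →
    ENNReal.ofReal lam * (volume {s | ENNReal.ofReal lam < sqFn K f s}) ^ ((1:ℝ)/p)
      ≤ ENNReal.ofReal A * eLpNorm f (ENNReal.ofReal p) volume

/-- Strong `L^q` boundedness of the square function operator, with constant `C`: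
`‖S_K f‖_{L^q} ≤ C‖f‖_{L^q}`. -/
def strongBdd {d : ℕ} {X Y : Type} [NormedAddCommGroup X] [NormedSpace ℝ X]
    [NormedAddCommGroup Y] [NormedSpace ℝ Y]
    (K : Ed d → Ed d → (X →L[ℝ] Y)) (q C : ℝ) : Prop :=
  ∀ f : Ed d → X, AEStronglyMeasurable f volume →
    (∫⁻ s, sqFn K f s ^ q) ^ ((1:ℝ)/q)
      ≤ ENNReal.ofReal C * eLpNorm f (ENNReal.ofReal q) volume

/-- The `2`-Hörmander condition with constant `H`. -/
def horm2 {d : ℕ} {X Y : Type} [NormedAddCommGroup X] [NormedSpace ℝ X]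
    [NormedAddCommGroup Y] [NormedSpace ℝ Y]
    (K : Ed d → Ed d → (X →L[ℝ] Y)) (H : ℝ) : Prop :=
  ∀ (c : Ed d) (r : ℝ), 0 < r →
    (∀ s s' : Ed d, s ∈ ball c (r/2) → s' ∈ ball c (r/2) →
      (∫⁻ t in (ball c r)ᶜ, (‖K s t - K s' t‖₊ : ℝ≥0∞) ^ (2:ℝ)) ^ ((1:ℝ)/2)
        ≤ ENNReal.ofReal H) ∧
    (∀ t t' : Ed d, t ∈ ball c (r/2) → t' ∈ ball c (r/2) →
      (∫⁻ s in (ball c r)ᶜ, (‖K s t - K s t'‖₊ : ℝ≥0∞) ^ (2:ℝ)) ^ ((1:ℝ)/2)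
        ≤ ENNReal.ofReal H)

/-- A modulus: increasing on `[0,1]`, subadditive, vanishing at `0`. -/
def IsModulus (ω : ℝ → ℝ) : Prop :=
  MonotoneOn ω (Icc (0:ℝ) 1) ∧ ω 0 = 0 ∧
    ∀ a b : ℝ, 0 ≤ a → 0 ≤ b → a + b ≤ 1 → ω (a + b) ≤ ω a + ω b

/-- `Dn` is the Dini constant `(∫₀¹ ω(r)² dr/r)^{1/2}` of the modulus `ω`. -/
def HasDiniConst (ω : ℝ → ℝ) (Dn : ℝ) : Prop :=
  0 ≤ Dn ∧ ∫⁻ r in Ioc (0:ℝ) 1, ENNReal.ofReal ((ω r)^2 / r) = ENNReal.ofReal (Dn ^ 2)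

/-- The `(ω,2)`-Dini condition for a kernel `K` on `ℝ^d × ℝ^d`. -/
def dini2 {d : ℕ} {X Y : Type} [NormedAddCommGroup X] [NormedSpace ℝ X]
    [NormedAddCommGroup Y] [NormedSpace ℝ Y]
    (K : Ed d → Ed d → (X →L[ℝ] Y)) (ω : ℝ → ℝ) : Prop :=
  (∀ s s' t : Ed d, s ≠ t → dist s s' ≤ dist s t / 2 →
      ‖K s t - K s' t‖ ≤ ω (dist s s' / dist s t) * dist s t ^ (-(d:ℝ)/2)) ∧
  (∀ s t t' : Ed d, s ≠ t → dist t t' ≤ dist s t / 2 →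
      ‖K s t - K s t'‖ ≤ ω (dist t t' / dist s t) * dist s t ^ (-(d:ℝ)/2))

/-- Axis-parallel (closed) cube with corner `a` and side length `h`. -/
def cube {d : ℕ} (a : Ed d) (h : ℝ) : Set (Ed d) :=
  {x | ∀ i, x i ∈ Icc (a i) (a i + h)}

/-- `Wc` is an upper bound for the Muckenhoupt `A_r` characteristic of the weight `w`. -/
def ApBound {d : ℕ} (w : Ed d → ℝ) (r : ℝ) (Wc : ℝ) : Prop :=
  ∀ (a : Ed d) (h : ℝ), 0 < h →
    ((volume (cube a h))⁻¹ * ∫⁻ s in cube a h, ENNReal.ofReal (w s)) *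
      (((volume (cube a h))⁻¹ *
        ∫⁻ s in cube a h, ENNReal.ofReal (w s) ^ (-(1:ℝ)/(r - 1))) ^ (r - 1))
      ≤ ENNReal.ofReal Wc

/-- The maximal operator `M₂` applied to `‖f‖`: `M₂(‖f‖)(s) = sup_{B ∋ s} (⨍_B ‖f‖²)^{1/2}`. -/
def M2 {d : ℕ} {X : Type} [NormedAddCommGroup X] (f : Ed d → X) (s : Ed d) : ℝ≥0∞ :=
  ⨆ (c : Ed d) (r : ℝ) (_ : 0 < r) (_ : s ∈ ball c r),
    ((volume (ball c r))⁻¹ * ∫⁻ t in ball c r, (‖f t‖₊ : ℝ≥0∞) ^ (2:ℝ)) ^ ((1:ℝ)/2)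

/-!
For `s, s' ∈ B(c, r/2)` and `t ∉ B(c, r)`, compare both `K(s,t)` and `K(s',t)` with `K(c,t)`:
the Dini condition applies at the centre because `|c - s| < r/2 ≤ |c - t|/2`, and gives
`‖K(s,t) - K(s',t)‖ ≤ 2 ω(r/(2|t - c|)) |t - c|^{-d/2}`. Integrating the square of this bound over
the dyadic annuli `2^j r ≤ |t - c| < 2^{j+1} r` gives at most `2^{d+2} |B(0,1)| ∑ⱼ ω(2^{-j-1})²`,
and monotonicity of `ω` bounds the sum by `2 ∫₀¹ ω(ρ)² dρ/ρ`.
-/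

lemma IsModulus.nonneg {ω : ℝ → ℝ} (hω : IsModulus ω) {x : ℝ} (hx : x ∈ Icc (0:ℝ) 1) :
    0 ≤ ω x :=
  hω.2.1 ▸ hω.1 (left_mem_Icc.2 zero_le_one) hx hx.1

lemma IsModulus.monotoneOn_sq {ω : ℝ → ℝ} (hω : IsModulus ω) :
    MonotoneOn (fun x => ω x ^ 2) (Icc 0 1) := fun _ hx _ hy hxy =>
  pow_le_pow_left₀ (hω.nonneg hx) (hω.1 hx hy hxy) 2

lemma ofReal_le_two_mul_setLIntegral_Ioc_div {g : ℝ → ℝ} {b : ℝ} (hb : 0 < b)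
    (hg : MonotoneOn g (Icc b (2 * b))) (hgb : 0 ≤ g b) :
    ENNReal.ofReal (g b) ≤ 2 * ∫⁻ x in Ioc b (2 * b), ENNReal.ofReal (g x / x) := by
  have hconst : ∀ x ∈ Ioc b (2 * b),
      ENNReal.ofReal (g b / (2 * b)) ≤ ENNReal.ofReal (g x / x) := by
    intro x hx
    have hx0 : 0 < x := hb.trans hx.1
    have hgx : g b ≤ g x := hg (left_mem_Icc.2 (by linarith)) (Ioc_subset_Icc_self hx) hx.1.le
    refine ENNReal.ofReal_le_ofReal ?_
    calc g b / (2 * b) ≤ g b / x := div_le_div_of_nonneg_left hgb hx0 hx.2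
      _ ≤ g x / x := by gcongr
  calc ENNReal.ofReal (g b) = 2 * (ENNReal.ofReal (g b / (2 * b)) * volume (Ioc b (2 * b))) := by
        rw [Real.volume_Ioc, ← ENNReal.ofReal_mul (by positivity), ← ENNReal.ofReal_ofNat 2,
          ← ENNReal.ofReal_mul zero_le_two]
        congr 1
        field_simp
        ring
    _ ≤ 2 * ∫⁻ x in Ioc b (2 * b), ENNReal.ofReal (g x / x) := by
        rw [← setLIntegral_const]
        gcongr 2 * ?_
        exact setLIntegral_mono' measurableSet_Ioc hconst

lemma tsum_dyadic_le_two_mul_lintegral {g : ℝ → ℝ} (hg : MonotoneOn g (Ioc 0 1))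
    (hg0 : ∀ x ∈ Ioc (0:ℝ) 1, 0 ≤ g x) :
    ∑' j : ℕ, ENNReal.ofReal (g ((2:ℝ) ^ (j + 1))⁻¹)
      ≤ 2 * ∫⁻ x in Ioc 0 1, ENNReal.ofReal (g x / x) := by
  set I : ℕ → Set ℝ := fun j => Ioc ((2:ℝ) ^ (j + 1))⁻¹ ((2:ℝ) ^ j)⁻¹
  have hI_sub : ∀ j : ℕ, Icc ((2:ℝ) ^ (j + 1))⁻¹ ((2:ℝ) ^ j)⁻¹ ⊆ Ioc 0 1 := fun j x hx =>
    ⟨lt_of_lt_of_le (by positivity) hx.1,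
      hx.2.trans (inv_le_one_of_one_le₀ (one_le_pow₀ one_le_two))⟩
  have hI_disj : Pairwise (Function.onFun Disjoint I) := by
    have hanti : Antitone fun j : ℕ => ((2:ℝ) ^ j)⁻¹ := fun i j hij =>
      inv_anti₀ (by positivity) (pow_le_pow_right₀ one_le_two hij)
    simpa only [Nat.succ_eq_add_one, Order.succ_eq_add_one] using
      hanti.pairwise_disjoint_on_Ioc_succ
  have htwo : ∀ j : ℕ, 2 * ((2:ℝ) ^ (j + 1))⁻¹ = ((2:ℝ) ^ j)⁻¹ := fun j => by
    rw [pow_succ]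
    field_simp
  calc ∑' j : ℕ, ENNReal.ofReal (g ((2:ℝ) ^ (j + 1))⁻¹)
      ≤ ∑' j : ℕ, 2 * ∫⁻ x in I j, ENNReal.ofReal (g x / x) := by
        refine ENNReal.tsum_le_tsum fun j => ?_
        have hsub : Icc ((2:ℝ) ^ (j + 1))⁻¹ (2 * ((2:ℝ) ^ (j + 1))⁻¹) ⊆ Ioc 0 1 := by
          rw [htwo]
          exact hI_sub j
        have hb := ofReal_le_two_mul_setLIntegral_Ioc_div (by positivity) (hg.mono hsub)
          (hg0 _ ⟨by positivity, inv_le_one_of_one_le₀ (one_le_pow₀ one_le_two)⟩)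
        rwa [htwo] at hb
    _ = 2 * ∫⁻ x in ⋃ j, I j, ENNReal.ofReal (g x / x) := by
        rw [ENNReal.tsum_mul_left, lintegral_iUnion (fun _ => measurableSet_Ioc) hI_disj]
    _ ≤ 2 * ∫⁻ x in Ioc 0 1, ENNReal.ofReal (g x / x) := by
        gcongr
        exact iUnion_subset fun j => Ioc_subset_Icc_self.trans (hI_sub j)

lemma compl_ball_subset_iUnion_annuli {α : Type*} [PseudoMetricSpace α] (c : α) {r : ℝ}
    (hr : 0 < r) : (ball c r)ᶜ ⊆ ⋃ j : ℕ, ball c (2 ^ (j + 1) * r) \ ball c (2 ^ j * r) := by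
  intro t ht
  rw [mem_compl_iff, mem_ball, not_lt] at ht
  obtain ⟨j, hj, hj1⟩ := exists_nat_pow_near ((one_le_div hr).2 ht) one_lt_two
  rw [le_div_iff₀ hr] at hj
  rw [div_lt_iff₀ hr] at hj1
  exact mem_iUnion.2 ⟨j, mem_ball.2 hj1, fun h => (mem_ball.1 h).not_ge hj⟩

section AddHaar

variable {E : Type*} [NormedAddCommGroup E] [NormedSpace ℝ E] [FiniteDimensional ℝ E]
  [MeasurableSpace E] [BorelSpace E] (μ : Measure E) [μ.IsAddHaarMeasure]

lemma setLIntegral_annulus_le {G : ℝ → ℝ} (hG : MonotoneOn G (Ioc 0 1))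
    (hG0 : ∀ x ∈ Ioc (0:ℝ) 1, 0 ≤ G x) (c : E) {r : ℝ} (hr : 0 < r) (j : ℕ) :
    ∫⁻ t in ball c (2 ^ (j + 1) * r) \ ball c (2 ^ j * r),
        ENNReal.ofReal (G (r / 2 / dist t c) / dist t c ^ Module.finrank ℝ E) ∂μ
      ≤ 2 ^ Module.finrank ℝ E * μ (ball 0 1) * ENNReal.ofReal (G ((2:ℝ) ^ (j + 1))⁻¹) := by
  set n := Module.finrank ℝ E
  set b : ℝ := ((2:ℝ) ^ (j + 1))⁻¹
  have hb : b ∈ Ioc (0:ℝ) 1 := ⟨by positivity, inv_le_one_of_one_le₀ (one_le_pow₀ one_le_two)⟩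
  have hR : 0 < (2:ℝ) ^ j * r := by positivity
  have hpt : ∀ t ∈ ball c (2 ^ (j + 1) * r) \ ball c (2 ^ j * r),
      ENNReal.ofReal (G (r / 2 / dist t c) / dist t c ^ n)
        ≤ ENNReal.ofReal (G b / ((2:ℝ) ^ j * r) ^ n) := by
    rintro t ⟨-, ht⟩
    rw [mem_ball, not_lt] at ht
    have hD : 0 < dist t c := hR.trans_le ht
    have hratio : r / 2 / dist t c ≤ b := by
      rw [div_le_iff₀ hD]
      calc r / 2 = b * ((2:ℝ) ^ j * r) := by
            simp only [b, pow_succ]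
            field_simp
        _ ≤ b * dist t c := by gcongr
    refine ENNReal.ofReal_le_ofReal ?_
    calc G (r / 2 / dist t c) / dist t c ^ n ≤ G b / dist t c ^ n := by
          gcongr
          exact hG ⟨by positivity, hratio.trans hb.2⟩ hb hratio
      _ ≤ G b / ((2:ℝ) ^ j * r) ^ n := by
          have := hG0 b hb
          gcongr
  calc ∫⁻ t in ball c (2 ^ (j + 1) * r) \ ball c (2 ^ j * r),
        ENNReal.ofReal (G (r / 2 / dist t c) / dist t c ^ n) ∂μ
      ≤ ∫⁻ _ in ball c (2 ^ (j + 1) * r) \ ball c (2 ^ j * r),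
          ENNReal.ofReal (G b / ((2:ℝ) ^ j * r) ^ n) ∂μ :=
        setLIntegral_mono' (measurableSet_ball.diff measurableSet_ball) hpt
    _ ≤ ENNReal.ofReal (G b / ((2:ℝ) ^ j * r) ^ n) * μ (ball c (2 ^ (j + 1) * r)) := by
        rw [setLIntegral_const]
        gcongr
        exact sdiff_subset
    _ = 2 ^ n * μ (ball 0 1) * ENNReal.ofReal (G b) := by
        rw [μ.addHaar_ball_of_pos c (by positivity), ← mul_assoc,
          ← ENNReal.ofReal_mul (div_nonneg (hG0 b hb) (by positivity))]
        have : G b / ((2:ℝ) ^ j * r) ^ n * ((2:ℝ) ^ (j + 1) * r) ^ n = 2 ^ n * G b := by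
          rw [pow_succ]
          field_simp
          ring
        rw [this, ENNReal.ofReal_mul (by positivity), ENNReal.ofReal_pow zero_le_two,
          ENNReal.ofReal_ofNat]
        ring

lemma lintegral_compl_ball_le_tsum {G : ℝ → ℝ} (hG : MonotoneOn G (Ioc 0 1))
    (hG0 : ∀ x ∈ Ioc (0:ℝ) 1, 0 ≤ G x) (c : E) {r : ℝ} (hr : 0 < r) :
    ∫⁻ t in (ball c r)ᶜ, ENNReal.ofReal (G (r / 2 / dist t c) / dist t c ^ Module.finrank ℝ E) ∂μ
      ≤ 2 ^ Module.finrank ℝ E * μ (ball 0 1) * ∑' j : ℕ, ENNReal.ofReal (G ((2:ℝ) ^ (j + 1))⁻¹) :=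
  calc _ ≤ ∑' j : ℕ, ∫⁻ t in ball c (2 ^ (j + 1) * r) \ ball c (2 ^ j * r),
          ENNReal.ofReal (G (r / 2 / dist t c) / dist t c ^ Module.finrank ℝ E) ∂μ :=
        (lintegral_mono_set (compl_ball_subset_iUnion_annuli c hr)).trans
          (lintegral_iUnion_le _ _)
    _ ≤ _ := by
        rw [← ENNReal.tsum_mul_left]
        exact ENNReal.tsum_le_tsum (setLIntegral_annulus_le μ hG hG0 c hr)

lemma lintegral_compl_ball_modulus_sq_le {ω : ℝ → ℝ} {Dn : ℝ} (hω : IsModulus ω)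
    (hD : HasDiniConst ω Dn) (c : E) {r : ℝ} (hr : 0 < r) :
    ∫⁻ t in (ball c r)ᶜ,
        ENNReal.ofReal (ω (r / 2 / dist t c) ^ 2 / dist t c ^ Module.finrank ℝ E) ∂μ
      ≤ 2 ^ (Module.finrank ℝ E + 1) * μ (ball 0 1) * ENNReal.ofReal (Dn ^ 2) := by
  have hsq := hω.monotoneOn_sq.mono Ioc_subset_Icc_self
  calc _ ≤ 2 ^ Module.finrank ℝ E * μ (ball 0 1)
          * ∑' j : ℕ, ENNReal.ofReal (ω ((2:ℝ) ^ (j + 1))⁻¹ ^ 2) :=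
        lintegral_compl_ball_le_tsum μ hsq (fun _ _ => sq_nonneg _) c hr
    _ ≤ 2 ^ Module.finrank ℝ E * μ (ball 0 1) * (2 * ENNReal.ofReal (Dn ^ 2)) := by
        rw [← hD.2]
        gcongr
        exact tsum_dyadic_le_two_mul_lintegral hsq fun _ _ => sq_nonneg _
    _ = _ := by ring

end AddHaar

lemma norm_sub_le_two_mul_of_modulus {α F : Type*} [PseudoMetricSpace α]
    [SeminormedAddCommGroup F] {ω : ℝ → ℝ} (hω : IsModulus ω) {f : α → F} {c u u' : α}
    {ρ D M : ℝ} (hM : 0 ≤ M) (hρD : ρ ≤ D / 2)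
    (hf : ∀ v, dist c v ≤ D / 2 → ‖f c - f v‖ ≤ ω (dist c v / D) * M)
    (hu : u ∈ ball c ρ) (hu' : u' ∈ ball c ρ) :
    ‖f u - f u'‖ ≤ 2 * (ω (ρ / D) * M) := by
  have hρ : 0 < ρ := pos_of_mem_ball hu
  have hD : 0 < D := by linarith
  have hρ1 : ρ / D ∈ Icc (0:ℝ) 1 := ⟨by positivity, (div_le_one hD).2 (by linarith)⟩
  have hcentre : ∀ v ∈ ball c ρ, ‖f c - f v‖ ≤ ω (ρ / D) * M := by
    intro v hv
    have hcv : dist c v < ρ := mem_ball'.1 hv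
    have hratio : dist c v / D ≤ ρ / D := by gcongr
    calc ‖f c - f v‖ ≤ ω (dist c v / D) * M := hf v (by linarith)
      _ ≤ ω (ρ / D) * M := by
          gcongr
          exact hω.1 ⟨by positivity, hratio.trans hρ1.2⟩ hρ1 hratio
  calc ‖f u - f u'‖ ≤ ‖f c - f u‖ + ‖f c - f u'‖ := by
        rw [norm_sub_rev (f c) (f u)]
        exact norm_sub_le_norm_sub_add_norm_sub _ _ _
    _ ≤ 2 * (ω (ρ / D) * M) := by linarith [hcentre u hu, hcentre u' hu']

lemma rpow_neg_div_two_sq {D : ℝ} (hD : 0 ≤ D) (n : ℕ) : (D ^ (-(n:ℝ) / 2)) ^ 2 = (D ^ n)⁻¹ := by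
  rw [← Real.rpow_mul_natCast hD, Nat.cast_ofNat, div_mul_cancel₀ _ two_ne_zero,
    Real.rpow_neg hD, Real.rpow_natCast]

def hormanderConst (d : ℕ) : ℝ := √(2 ^ (d + 3) * volume.real (ball (0 : Ed d) 1))

lemma hormanderConst_pos (d : ℕ) : 0 < hormanderConst d :=
  Real.sqrt_pos.2 (mul_pos (by positivity)
    (ENNReal.toReal_pos (measure_ball_pos _ _ one_pos).ne' measure_ball_lt_top.ne))

lemma lintegral_compl_ball_sq_le_hormanderConst {d : ℕ} {F : Type*} [SeminormedAddCommGroup F]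
    {ω : ℝ → ℝ} {Dn : ℝ} (hω : IsModulus ω) (hD : HasDiniConst ω Dn) {c : Ed d} {r : ℝ}
    (hr : 0 < r) {f : Ed d → F}
    (hf : ∀ t ∉ ball c r, ‖f t‖ ≤ 2 * (ω (r / 2 / dist t c) * dist t c ^ (-(d:ℝ) / 2))) :
    (∫⁻ t in (ball c r)ᶜ, (‖f t‖₊ : ℝ≥0∞) ^ (2:ℝ)) ^ ((1:ℝ) / 2)
      ≤ ENNReal.ofReal (hormanderConst d * Dn) := by
  have hpt : ∀ t ∈ (ball c r)ᶜ, (‖f t‖₊ : ℝ≥0∞) ^ (2:ℝ)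
      ≤ 4 * ENNReal.ofReal (ω (r / 2 / dist t c) ^ 2 / dist t c ^ d) := by
    intro t ht
    have hsq : ‖f t‖ ^ 2 ≤ 4 * (ω (r / 2 / dist t c) ^ 2 / dist t c ^ d) := by
      calc ‖f t‖ ^ 2 ≤ (2 * (ω (r / 2 / dist t c) * dist t c ^ (-(d:ℝ) / 2))) ^ 2 :=
            pow_le_pow_left₀ (norm_nonneg _) (hf t ht) 2
        _ = _ := by rw [mul_pow, mul_pow, rpow_neg_div_two_sq dist_nonneg]; ring
    rw [← ENNReal.ofReal_ofNat 4, ← ENNReal.ofReal_mul (by norm_num), ← enorm_eq_nnnorm,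
      ← ofReal_norm, ENNReal.ofReal_rpow_of_nonneg (norm_nonneg _) zero_le_two]
    exact ENNReal.ofReal_le_ofReal (by exact_mod_cast hsq)
  have hint : ∫⁻ t in (ball c r)ᶜ, (‖f t‖₊ : ℝ≥0∞) ^ (2:ℝ)
      ≤ 2 ^ (d + 3) * volume (ball (0 : Ed d) 1) * ENNReal.ofReal (Dn ^ 2) :=
    calc _ ≤ ∫⁻ t in (ball c r)ᶜ, 4 * ENNReal.ofReal (ω (r / 2 / dist t c) ^ 2 / dist t c ^ d) :=
          setLIntegral_mono' measurableSet_ball.compl hpt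
      _ = 4 * ∫⁻ t in (ball c r)ᶜ, ENNReal.ofReal (ω (r / 2 / dist t c) ^ 2 / dist t c ^ d) :=
          lintegral_const_mul' _ _ (by norm_num)
      _ ≤ 4 * (2 ^ (d + 1) * volume (ball (0 : Ed d) 1) * ENNReal.ofReal (Dn ^ 2)) := by
          gcongr
          simpa only [finrank_euclideanSpace_fin] using
            lintegral_compl_ball_modulus_sq_le volume hω hD c hr
      _ = _ := by ring
  rw [one_div, ENNReal.rpow_inv_le_iff two_pos]
  refine hint.trans (le_of_eq ?_)
  rw [ENNReal.ofReal_rpow_of_nonneg (mul_nonneg (hormanderConst_pos d).le hD.1) zero_le_two,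
    Real.rpow_two, mul_pow, hormanderConst, Real.sq_sqrt (by positivity),
    ENNReal.ofReal_mul (by positivity), ENNReal.ofReal_mul (by positivity),
    ofReal_measureReal measure_ball_lt_top.ne, ENNReal.ofReal_pow zero_le_two, ENNReal.ofReal_ofNat]

theorem statement0_general (d : ℕ) :
    ∃ C : ℝ, 0 < C ∧
      ∀ (X : Type) [NormedAddCommGroup X] [NormedSpace ℝ X] [CompleteSpace X]
        (Y : Type) [NormedAddCommGroup Y] [NormedSpace ℝ Y] [CompleteSpace Y]
        (K : Ed d → Ed d → (X →L[ℝ] Y)) (ω : ℝ → ℝ) (Dn : ℝ),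
        smK K → IsModulus ω → HasDiniConst ω Dn → dini2 K ω →
        horm2 K (C * Dn) := by
  refine ⟨hormanderConst d, hormanderConst_pos d, ?_⟩
  intro X _ _ _ Y _ _ _ K ω Dn _ hω hD hK c r hr
  refine ⟨fun s s' hs hs' => ?_, fun t t' ht ht' => ?_⟩
  · refine lintegral_compl_ball_sq_le_hormanderConst hω hD hr fun t htc => ?_
    have htc' : r ≤ dist t c := not_lt.1 htc
    refine norm_sub_le_two_mul_of_modulus hω (f := fun a => K a t) (by positivity)
      (by linarith) (fun u hu => ?_) hs hs'
    have hct : c ≠ t := dist_pos.1 (by rw [dist_comm]; linarith)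
    simpa only [dist_comm c t] using hK.1 c u t hct (by rwa [dist_comm c t])
  · refine lintegral_compl_ball_sq_le_hormanderConst hω hD hr fun s hsc => ?_
    have hsc' : r ≤ dist s c := not_lt.1 hsc
    exact norm_sub_le_two_mul_of_modulus hω (f := fun a => K s a) (by positivity)
      (by linarith) (fun u hu => hK.2 s c u (dist_pos.1 (by linarith)) hu) ht ht'

/-- An `(ω,2)`-Dini kernel is a `2`-Hörmander kernel, with Hörmander
constant `C(d)·‖ω‖_{Dini}`. -/
theorem statement0 (d : ℕ) (hd : 1 ≤ d) :
    ∃ C : ℝ, 0 < C ∧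
      ∀ (X : Type) [NormedAddCommGroup X] [NormedSpace ℝ X] [CompleteSpace X]
        (Y : Type) [NormedAddCommGroup Y] [NormedSpace ℝ Y] [CompleteSpace Y]
        (K : Ed d → Ed d → (X →L[ℝ] Y)) (ω : ℝ → ℝ) (Dn : ℝ),
        smK K → IsModulus ω → HasDiniConst ω Dn → dini2 K ω →
        horm2 K (C * Dn) :=
  statement0_general d
end
end

section
/- Let X and Y be Banach spaces, let ε ∈ (0,1/2) and A₀ > 0, and let Φ : (0,∞) → 𝓛(X,Y) be strongly measurable with ‖Φ(s)‖ ≤ A₀·s^{−1/2−ε} for all s > 0. Define k : ℝ → 𝓛(X,Y) by k(s) := Γ(ε)^{−1}·∫₀^s (s−r)^{ε−1} Φ(r) dr (a convergent Bochner integral applied to each x ∈ X) for s > 0 and k(s) := 0 for s ≤ 0. Then there exists a constant C depending only on ε such that ‖k(s−t) − k(s)‖ ≤ C·A₀·(|t|/|s|)^{ε}·|s|^{−1/2} whenever |t| ≤ |s|/2 and s ≠ 0; i.e. the kernel K(s,t) := k(s−t) is an (ε,2)-standard kernel (of convolution type, d = 1). -/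
open MeasureTheory ENNReal Metric Set

noncomputable section

/-!
With `I(c) = ∫₀ᶜ (c - r) ^ (α - 1) g(r) dr` and `a ≤ b ≤ 2a`, split `I(b) - I(a)` at `a/2` and `a`.
On `(0, a/2]` the two kernels differ by `O((b - a) a ^ (α - 2))` (Bernoulli's inequality) while
`‖g r‖ ≤ B r ^ (-γ)` is integrable; on `(a/2, a]` and `(a, b]` instead `‖g‖ = O(B a ^ (-γ))` and the
kernels have integral `O((b - a) ^ α)`. Every piece is `O(B (b - a) ^ α a ^ (-γ))`, which for
`α = ε`, `γ = 1/2 + ε` is the standard estimate; `k` vanishes identically on `(-∞, 0]`.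
-/

lemma rpow_sub_rpow_le_of_nonpos {q x y : ℝ} (hq : -1 ≤ q) (hq0 : q ≤ 0) (hx : 0 < x)
    (hxy : x ≤ y) : x ^ q - y ^ q ≤ -q * (y - x) * x ^ (q - 1) := by
  set u := (y - x) / x with hu_def
  have hu : 0 ≤ u := div_nonneg (by linarith) hx.le
  have hy : y = x * (1 + u) := by rw [hu_def]; field_simp; ring
  set w := (1 + u) ^ q
  -- Bernoulli's inequality for the exponent `-q ∈ [0, 1]`, multiplied by `w = (1 + u) ^ q`
  have hbern : (1 + u) ^ (-q) ≤ 1 + -q * u :=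
    rpow_one_add_le_one_add_mul_self (by linarith) (by linarith) (by linarith)
  have hw0 : 0 < w := by positivity
  have hw1 : w ≤ 1 := Real.rpow_le_one_of_one_le_of_nonpos (by linarith) hq0
  have hww : w * (1 + u) ^ (-q) = 1 := by
    rw [Real.rpow_neg (by linarith), mul_inv_cancel₀ hw0.ne']
  have hw : 1 - w ≤ -q * u := by
    nlinarith [mul_le_mul_of_nonneg_left hbern hw0.le, mul_nonneg (neg_nonneg.2 hq0) hu]
  have hxq : 0 < x ^ q := by positivity
  calc x ^ q - y ^ q = x ^ q * (1 - w) := by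
        rw [hy, Real.mul_rpow hx.le (by linarith)]; ring
    _ ≤ x ^ q * (-q * u) := by gcongr
    _ = -q * (y - x) * x ^ (q - 1) := by
        rw [Real.rpow_sub_one hx.ne', hu_def]; field_simp

lemma div_two_rpow_le {a e n : ℝ} (ha : 0 ≤ a) (hen : -e ≤ n) :
    (a / 2) ^ e ≤ 2 ^ n * a ^ e := by
  rw [Real.div_rpow ha zero_le_two, div_eq_mul_inv, ← Real.rpow_neg zero_le_two, mul_comm]
  exact mul_le_mul_of_nonneg_right (Real.rpow_le_rpow_of_exponent_le one_le_two hen)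
    (Real.rpow_nonneg ha e)

lemma mul_rpow_sub_one_le_rpow {δ a α : ℝ} (hδ : 0 ≤ δ) (hδa : δ ≤ a) (hα : α ≤ 1) :
    δ * a ^ (α - 1) ≤ δ ^ α := by
  rcases hδ.eq_or_lt with rfl | hδ
  · simpa using Real.rpow_nonneg le_rfl α
  calc δ * a ^ (α - 1) ≤ δ * δ ^ (α - 1) :=
        mul_le_mul_of_nonneg_left (Real.rpow_le_rpow_of_nonpos hδ hδa (by linarith)) hδ.le
    _ = δ ^ α := by rw [Real.rpow_sub_one hδ.ne']; field_simp

lemma intervalIntegrable_sub_rpow {q : ℝ} (hq : -1 < q) (c u v : ℝ) :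
    IntervalIntegrable (fun r : ℝ => (c - r) ^ q) volume u v := by
  simpa using
    (intervalIntegral.intervalIntegrable_rpow' (a := c - u) (b := c - v) hq).comp_sub_left c

lemma integral_sub_rpow {q : ℝ} (hq : -1 < q) (c u v : ℝ) :
    ∫ r in u..v, (c - r) ^ q = ((c - u) ^ (q + 1) - (c - v) ^ (q + 1)) / (q + 1) := by
  rw [intervalIntegral.integral_comp_sub_left (fun r : ℝ => r ^ q) c, integral_rpow (Or.inl hq)]

lemma abs_sub_rpow_sub_rpow_le {α a b r : ℝ} (hα0 : 0 ≤ α) (hα1 : α ≤ 1) (ha : 0 < a)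
    (hab : a ≤ b) (hr : r ≤ a / 2) :
    |(b - r) ^ (α - 1) - (a - r) ^ (α - 1)| ≤ (b - a) * (a / 2) ^ (α - 2) := by
  have htangent := rpow_sub_rpow_le_of_nonpos (q := α - 1) (by linarith) (by linarith)
    (by linarith : 0 < a - r) (by linarith : a - r ≤ b - r)
  rw [show α - 1 - 1 = α - 2 by ring, show b - r - (a - r) = b - a by ring] at htangent
  have hhalf : (a - r) ^ (α - 2) ≤ (a / 2) ^ (α - 2) :=
    Real.rpow_le_rpow_of_nonpos (by linarith) (by linarith) (by linarith)
  have hmono : (b - r) ^ (α - 1) ≤ (a - r) ^ (α - 1) :=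
    Real.rpow_le_rpow_of_nonpos (by linarith) (by linarith) (by linarith)
  rw [abs_sub_comm, abs_of_nonneg (sub_nonneg.2 hmono)]
  have := mul_le_mul_of_nonneg_left hhalf
    (mul_nonneg (by linarith : 0 ≤ -(α - 1)) (by linarith : 0 ≤ b - a))
  have := mul_nonneg (mul_nonneg hα0 (by linarith : 0 ≤ b - a))
    (Real.rpow_nonneg (by linarith : 0 ≤ a / 2) (α - 2))
  linarith

lemma nonneg_of_norm_le_mul_rpow {E : Type*} [NormedAddCommGroup E] {g : ℝ → E} {B γ : ℝ}
    (hgB : ∀ r, 0 < r → ‖g r‖ ≤ B * r ^ (-γ)) : 0 ≤ B := by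
  simpa using (norm_nonneg _).trans (hgB 1 one_pos)

section RiemannLiouville

variable {E : Type*} [NormedAddCommGroup E] [NormedSpace ℝ E] {g : ℝ → E} {α β γ B a b : ℝ}

lemma norm_intervalIntegral_le_of_norm_le_Ioo {f : ℝ → E} {ψ : ℝ → ℝ} {u v : ℝ} (huv : u ≤ v)
    (h : ∀ r ∈ Ioo u v, ‖f r‖ ≤ ψ r) (hψ : IntervalIntegrable ψ volume u v) :
    ‖∫ r in u..v, f r‖ ≤ ∫ r in u..v, ψ r :=
  intervalIntegral.norm_integral_le_of_norm_le huv
    ((volume.ae_ne v).mono fun r hrv hr => h r ⟨hr.1, hr.2.lt_of_ne hrv⟩) hψ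

/-- The Riemann–Liouville integral `∫₀ᶜ (c - r) ^ (α - 1) g(r) dr` of order `α`, without the
normalising factor `Γ(α)⁻¹`. -/
def rlIntegral (α : ℝ) (g : ℝ → E) (c : ℝ) : E :=
  ∫ r in Ioo 0 c, (c - r) ^ (α - 1) • g r

lemma rlIntegral_eq_intervalIntegral {c : ℝ} (hc : 0 ≤ c) :
    rlIntegral α g c = ∫ r in (0)..c, (c - r) ^ (α - 1) • g r := by
  rw [rlIntegral, intervalIntegral.integral_of_le hc, integral_Ioc_eq_integral_Ioo]

lemma intervalIntegrable_rlIntegrand (hα : 0 < α) (hα1 : α ≤ 1) (hγ0 : 0 ≤ γ) (hγ1 : γ < 1)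
    (hg : AEStronglyMeasurable g) (hgB : ∀ r, 0 < r → ‖g r‖ ≤ B * r ^ (-γ)) {c : ℝ}
    (hc : 0 < c) : IntervalIntegrable (fun r => (c - r) ^ (α - 1) • g r) volume 0 c := by
  have hB := nonneg_of_norm_le_mul_rpow hgB
  have hmeas : AEStronglyMeasurable (fun r => (c - r) ^ (α - 1) • g r) :=
    ((measurable_const.sub measurable_id).pow_const _).aestronglyMeasurable.smul hg
  -- near `0` the kernel is bounded and `g` is integrable, near `c` the other way round
  refine IntervalIntegrable.trans (b := c / 2) ?_ ?_
  · refine ((intervalIntegral.intervalIntegrable_rpow' (by linarith : -1 < -γ)).const_mul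
      ((c / 2) ^ (α - 1) * B)).mono_fun' hmeas.restrict ?_
    refine (ae_restrict_mem measurableSet_uIoc).mono fun r hr => ?_
    rw [uIoc_of_le (by linarith)] at hr
    dsimp only
    rw [norm_smul, Real.norm_of_nonneg (Real.rpow_nonneg (by linarith [hr.2]) _), mul_assoc]
    exact mul_le_mul (Real.rpow_le_rpow_of_nonpos (by linarith) (by linarith [hr.2])
      (by linarith)) (hgB r hr.1) (norm_nonneg _) (by positivity)
  · refine ((intervalIntegrable_sub_rpow (by linarith : -1 < α - 1) c _ _).const_mul
      (B * (c / 2) ^ (-γ))).mono_fun' hmeas.restrict ?_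
    refine (ae_restrict_mem measurableSet_uIoc).mono fun r hr => ?_
    rw [uIoc_of_le (by linarith)] at hr
    dsimp only
    rw [norm_smul, Real.norm_of_nonneg (Real.rpow_nonneg (by linarith [hr.2]) _), mul_comm]
    refine mul_le_mul_of_nonneg_right ((hgB r (by linarith [hr.1])).trans ?_)
      (Real.rpow_nonneg (by linarith [hr.2]) _)
    exact mul_le_mul_of_nonneg_left
      (Real.rpow_le_rpow_of_nonpos (by linarith) hr.1.le (by linarith)) hB

lemma norm_integral_zero_half_le (hα0 : 0 ≤ α) (hα1 : α ≤ 1) (hγ1 : γ < 1)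
    (hgB : ∀ r, 0 < r → ‖g r‖ ≤ B * r ^ (-γ)) (ha : 0 < a) (hab : a ≤ b) (hb : b ≤ 2 * a) :
    ‖∫ r in (0)..a / 2, ((b - r) ^ (α - 1) - (a - r) ^ (α - 1)) • g r‖
      ≤ 4 / (1 - γ) * B * (b - a) ^ α * a ^ (-γ) := by
  have hB := nonneg_of_norm_le_mul_rpow hgB
  have hγ : 0 < 1 - γ := by linarith
  calc ‖∫ r in (0)..a / 2, ((b - r) ^ (α - 1) - (a - r) ^ (α - 1)) • g r‖
      ≤ ∫ r in (0)..a / 2, (b - a) * (a / 2) ^ (α - 2) * B * r ^ (-γ) := by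
        refine norm_intervalIntegral_le_of_norm_le_Ioo (by linarith) (fun r hr => ?_)
          ((intervalIntegral.intervalIntegrable_rpow' (by linarith)).const_mul _)
        rw [norm_smul, Real.norm_eq_abs, mul_assoc]
        exact mul_le_mul (abs_sub_rpow_sub_rpow_le hα0 hα1 ha hab hr.2.le) (hgB r hr.1)
          (norm_nonneg _) (by positivity)
    _ = (b - a) * B * (a / 2) ^ (α - 1 - γ) / (1 - γ) := by
        rw [intervalIntegral.integral_const_mul, integral_rpow (Or.inl (by linarith)),
          Real.zero_rpow (by linarith), sub_zero, show -γ + 1 = 1 - γ by ring,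
          show α - 1 - γ = (α - 2) + (1 - γ) by ring, Real.rpow_add (by linarith)]
        ring
    _ ≤ (b - a) * B * (2 ^ (2 : ℝ) * a ^ (α - 1 - γ)) / (1 - γ) := by
        gcongr
        exact div_two_rpow_le ha.le (by linarith)
    _ = 4 / (1 - γ) * B * ((b - a) * a ^ (α - 1)) * a ^ (-γ) := by
        rw [show α - 1 - γ = (α - 1) + -γ by ring, Real.rpow_add ha]
        norm_num
        ring
    _ ≤ 4 / (1 - γ) * B * (b - a) ^ α * a ^ (-γ) := by
        gcongr
        exact mul_rpow_sub_one_le_rpow (by linarith) (by linarith) hα1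

lemma norm_integral_half_le (hα : 0 < α) (hα1 : α ≤ 1) (hγ0 : 0 ≤ γ) (hγ1 : γ ≤ 1)
    (hgB : ∀ r, 0 < r → ‖g r‖ ≤ B * r ^ (-γ)) (ha : 0 < a) (hab : a ≤ b) :
    ‖∫ r in a / 2..a, ((b - r) ^ (α - 1) - (a - r) ^ (α - 1)) • g r‖
      ≤ 2 / α * B * (b - a) ^ α * a ^ (-γ) := by
  have hB := nonneg_of_norm_le_mul_rpow hgB
  have hq : -1 < α - 1 := by linarith
  calc ‖∫ r in a / 2..a, ((b - r) ^ (α - 1) - (a - r) ^ (α - 1)) • g r‖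
      ≤ ∫ r in a / 2..a, B * (a / 2) ^ (-γ) * ((a - r) ^ (α - 1) - (b - r) ^ (α - 1)) := by
        refine norm_intervalIntegral_le_of_norm_le_Ioo (by linarith) (fun r hr => ?_)
          (((intervalIntegrable_sub_rpow hq a _ _).sub
            (intervalIntegrable_sub_rpow hq b _ _)).const_mul _)
        have hkernel : (b - r) ^ (α - 1) ≤ (a - r) ^ (α - 1) :=
          Real.rpow_le_rpow_of_nonpos (by linarith [hr.2]) (by linarith) (by linarith)
        rw [norm_smul, Real.norm_eq_abs, abs_sub_comm, abs_of_nonneg (sub_nonneg.2 hkernel),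
          mul_comm]
        refine mul_le_mul_of_nonneg_right ((hgB r (by linarith [hr.1])).trans ?_)
          (sub_nonneg.2 hkernel)
        exact mul_le_mul_of_nonneg_left
          (Real.rpow_le_rpow_of_nonpos (by linarith) hr.1.le (by linarith)) hB
    _ = B * (a / 2) ^ (-γ) * (((b - a) ^ α - ((b - a / 2) ^ α - (a / 2) ^ α)) / α) := by
        rw [intervalIntegral.integral_const_mul, intervalIntegral.integral_sub
          (intervalIntegrable_sub_rpow hq _ _ _) (intervalIntegrable_sub_rpow hq _ _ _),
          integral_sub_rpow hq, integral_sub_rpow hq, sub_add_cancel, sub_self,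
          Real.zero_rpow hα.ne', show a - a / 2 = a / 2 by ring]
        ring
    _ ≤ B * (a / 2) ^ (-γ) * ((b - a) ^ α / α) := by
        gcongr
        linarith [Real.rpow_le_rpow (by linarith) (by linarith : a / 2 ≤ b - a / 2) hα.le]
    _ ≤ B * (2 ^ (1 : ℝ) * a ^ (-γ)) * ((b - a) ^ α / α) := by
        gcongr
        exact div_two_rpow_le ha.le (by linarith)
    _ = 2 / α * B * (b - a) ^ α * a ^ (-γ) := by
        rw [Real.rpow_one]
        ring

lemma norm_integral_tail_le (hα : 0 < α) (hγ0 : 0 ≤ γ)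
    (hgB : ∀ r, 0 < r → ‖g r‖ ≤ B * r ^ (-γ)) (ha : 0 < a) (hab : a ≤ b) :
    ‖∫ r in a..b, (b - r) ^ (α - 1) • g r‖ ≤ 1 / α * B * (b - a) ^ α * a ^ (-γ) := by
  have hB := nonneg_of_norm_le_mul_rpow hgB
  have hq : -1 < α - 1 := by linarith
  calc ‖∫ r in a..b, (b - r) ^ (α - 1) • g r‖
      ≤ ∫ r in a..b, B * a ^ (-γ) * (b - r) ^ (α - 1) := by
        refine norm_intervalIntegral_le_of_norm_le_Ioo hab (fun r hr => ?_)
          ((intervalIntegrable_sub_rpow hq b _ _).const_mul _)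
        have hkernel : 0 ≤ (b - r) ^ (α - 1) := Real.rpow_nonneg (by linarith [hr.2]) _
        rw [norm_smul, Real.norm_of_nonneg hkernel, mul_comm]
        refine mul_le_mul_of_nonneg_right ((hgB r (by linarith [hr.1])).trans ?_) hkernel
        exact mul_le_mul_of_nonneg_left
          (Real.rpow_le_rpow_of_nonpos ha hr.1.le (by linarith)) hB
    _ = 1 / α * B * (b - a) ^ α * a ^ (-γ) := by
        rw [intervalIntegral.integral_const_mul, integral_sub_rpow hq, sub_add_cancel, sub_self,
          Real.zero_rpow hα.ne']
        ring

lemma rlIntegral_sub_rlIntegral_eq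
    (hfb : IntervalIntegrable (fun r => (b - r) ^ (α - 1) • g r) volume 0 b)
    (hfa : IntervalIntegrable (fun r => (a - r) ^ (α - 1) • g r) volume 0 a)
    (ha : 0 < a) (hab : a ≤ b) :
    rlIntegral α g b - rlIntegral α g a =
      (∫ r in (0)..a / 2, ((b - r) ^ (α - 1) - (a - r) ^ (α - 1)) • g r) +
      (∫ r in a / 2..a, ((b - r) ^ (α - 1) - (a - r) ^ (α - 1)) • g r) +
      ∫ r in a..b, (b - r) ^ (α - 1) • g r := by
  have hsub {c u v : ℝ} (hf : IntervalIntegrable (fun r => (c - r) ^ (α - 1) • g r) volume 0 c)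
      (hu : 0 ≤ u) (huv : u ≤ v) (hv : v ≤ c) :
      IntervalIntegrable (fun r => (c - r) ^ (α - 1) • g r) volume u v :=
    hf.mono_set (by
      rw [uIcc_of_le (hu.trans (huv.trans hv)), uIcc_of_le huv]
      exact Icc_subset_Icc hu hv)
  have h0 : (0 : ℝ) ≤ a / 2 := by linarith
  have h1 : a / 2 ≤ a := by linarith
  rw [rlIntegral_eq_intervalIntegral (ha.le.trans hab), rlIntegral_eq_intervalIntegral ha.le,
    ← intervalIntegral.integral_add_adjacent_intervals (hsub hfb le_rfl ha.le hab)
      (hsub hfb ha.le hab le_rfl),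
    ← intervalIntegral.integral_add_adjacent_intervals (hsub hfb le_rfl h0 (h1.trans hab))
      (hsub hfb h0 h1 hab),
    ← intervalIntegral.integral_add_adjacent_intervals (hsub hfa le_rfl h0 h1)
      (hsub hfa h0 h1 le_rfl)]
  simp only [sub_smul]
  rw [intervalIntegral.integral_sub (hsub hfb le_rfl h0 (h1.trans hab)) (hsub hfa le_rfl h0 h1),
    intervalIntegral.integral_sub (hsub hfb h0 h1 hab) (hsub hfa h0 h1 le_rfl)]
  abel

theorem norm_rlIntegral_sub_rlIntegral_le (hα : 0 < α) (hα1 : α ≤ 1) (hγ0 : 0 ≤ γ)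
    (hγ1 : γ < 1) (hg : AEStronglyMeasurable g) (hgB : ∀ r, 0 < r → ‖g r‖ ≤ B * r ^ (-γ))
    (ha : 0 < a) (hab : a ≤ b) (hb : b ≤ 2 * a) :
    ‖rlIntegral α g b - rlIntegral α g a‖ ≤ (4 / (1 - γ) + 3 / α) * B * (b - a) ^ α * a ^ (-γ) := by
  rw [rlIntegral_sub_rlIntegral_eq
    (intervalIntegrable_rlIntegrand hα hα1 hγ0 hγ1 hg hgB (ha.trans_le hab))
    (intervalIntegrable_rlIntegrand hα hα1 hγ0 hγ1 hg hgB ha) ha hab]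
  calc _ ≤ 4 / (1 - γ) * B * (b - a) ^ α * a ^ (-γ) + 2 / α * B * (b - a) ^ α * a ^ (-γ)
        + 1 / α * B * (b - a) ^ α * a ^ (-γ) :=
        (norm_add₃_le).trans (add_le_add_three
          (norm_integral_zero_half_le hα.le hα1 hγ1 hgB ha hab hb)
          (norm_integral_half_le hα hα1 hγ0 hγ1.le hgB ha hab)
          (norm_integral_tail_le hα hγ0 hgB ha hab))
    _ = (4 / (1 - γ) + 3 / α) * B * (b - a) ^ α * a ^ (-γ) := by ring

theorem norm_rlIntegral_sub_rlIntegral_le_of_abs_le_half (hα : 0 < α) (hα1 : α ≤ 1)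
    (hβ : 0 ≤ β) (hβα : β + α < 1) (hg : AEStronglyMeasurable g)
    (hgB : ∀ r, 0 < r → ‖g r‖ ≤ B * r ^ (-(β + α))) {s t : ℝ} (hs : 0 < s) (ht : |t| ≤ s / 2) :
    ‖rlIntegral α g (s - t) - rlIntegral α g s‖
      ≤ 2 * (4 / (1 - (β + α)) + 3 / α) * B * (|t| / s) ^ α * s ^ (-β) := by
  have hB := nonneg_of_norm_le_mul_rpow hgB
  have hC : 0 ≤ 4 / (1 - (β + α)) + 3 / α := by have := sub_pos.2 hβα; positivity
  have hpow : |t| ^ α * s ^ (-(β + α)) = (|t| / s) ^ α * s ^ (-β) := by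
    rw [Real.div_rpow (abs_nonneg t) hs.le, neg_add, Real.rpow_add hs, Real.rpow_neg hs.le α]
    field_simp
  have key : ∀ a b, s / 2 ≤ a → a ≤ b → b ≤ 2 * a → b - a = |t| →
      ‖rlIntegral α g b - rlIntegral α g a‖
        ≤ 2 * (4 / (1 - (β + α)) + 3 / α) * B * (|t| / s) ^ α * s ^ (-β) := by
    intro a b hsa hab hb hba
    calc _ ≤ (4 / (1 - (β + α)) + 3 / α) * B * (b - a) ^ α * a ^ (-(β + α)) :=
          norm_rlIntegral_sub_rlIntegral_le hα hα1 (by linarith) hβα hg hgB (by linarith) hab hb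
      _ ≤ (4 / (1 - (β + α)) + 3 / α) * B * |t| ^ α * (2 ^ (1 : ℝ) * s ^ (-(β + α))) := by
          rw [hba]
          gcongr
          exact (Real.rpow_le_rpow_of_nonpos (by linarith) hsa (by linarith)).trans
            (div_two_rpow_le hs.le (by linarith))
      _ = 2 * (4 / (1 - (β + α)) + 3 / α) * B * (|t| / s) ^ α * s ^ (-β) := by
          rw [Real.rpow_one, mul_assoc _ ((|t| / s) ^ α), ← hpow]
          ring
  obtain ⟨hlo, hhi⟩ := abs_le.1 ht
  rcases le_total 0 t with ht0 | ht0
  · rw [norm_sub_rev]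
    exact key (s - t) s (by linarith) (by linarith) (by linarith)
      (by rw [abs_of_nonneg ht0]; ring)
  · exact key s (s - t) (by linarith) (by linarith) (by linarith)
      (by rw [abs_of_nonpos ht0]; ring)

end RiemannLiouville

/-- fractional integration of an operator family `Φ` with
`‖Φ(s)‖ ≤ A₀ s^{-1/2-ε}` yields an `(ε,2)`-standard convolution kernel on `ℝ`. -/
theorem statement2 (ε : ℝ) (hε : 0 < ε) (hε' : ε < 1/2) :
    ∃ C : ℝ, 0 < C ∧
      ∀ (X : Type) [NormedAddCommGroup X] [NormedSpace ℝ X] [CompleteSpace X]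
        (Y : Type) [NormedAddCommGroup Y] [NormedSpace ℝ Y] [CompleteSpace Y]
        (A₀ : ℝ), 0 < A₀ → ∀ Φ k : ℝ → (X →L[ℝ] Y),
        (∀ x : X, StronglyMeasurable fun r => Φ r x) →
        (∀ s : ℝ, 0 < s → ‖Φ s‖ ≤ A₀ * s ^ (-(1:ℝ)/2 - ε)) →
        (∀ (x : X) (s : ℝ), 0 < s →
          k s x = (Real.Gamma ε)⁻¹ • ∫ r in Ioo (0:ℝ) s, ((s - r) ^ (ε - 1)) • Φ r x) →
        (∀ s : ℝ, s ≤ 0 → k s = 0) →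
        ∀ s t : ℝ, s ≠ 0 → |t| ≤ |s| / 2 →
          ‖k (s - t) - k s‖ ≤ C * A₀ * (|t| / |s|) ^ ε * |s| ^ (-(1:ℝ)/2) := by
  have hε₁ : 0 < 1 - (1 / 2 + ε) := by linarith
  have hΓ : 0 < (Real.Gamma ε)⁻¹ := inv_pos.2 (Real.Gamma_pos_of_pos hε)
  refine ⟨2 * (4 / (1 - (1 / 2 + ε)) + 3 / ε) * (Real.Gamma ε)⁻¹, by positivity, ?_⟩
  intro X _ _ _ Y _ _ _ A₀ hA₀ Φ k hΦm hΦ hk hk0 s t hs ht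
  rcases hs.lt_or_gt with hs | hs
  · have hst : s - t ≤ 0 := by linarith [neg_abs_le t, abs_of_neg hs]
    rw [hk0 _ hst, hk0 _ hs.le, sub_zero, norm_zero]
    positivity
  rw [abs_of_pos hs] at ht ⊢
  refine ContinuousLinearMap.opNorm_le_bound _ (by positivity) fun x => ?_
  have hΦx : ∀ r, 0 < r → ‖Φ r x‖ ≤ A₀ * ‖x‖ * r ^ (-(1 / 2 + ε)) := fun r hr =>
    calc ‖Φ r x‖ ≤ A₀ * r ^ (-(1 : ℝ) / 2 - ε) * ‖x‖ := (Φ r).le_of_opNorm_le (hΦ r hr) x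
      _ = A₀ * ‖x‖ * r ^ (-(1 / 2 + ε)) := by ring_nf
  have hkx : (k (s - t) - k s) x = (Real.Gamma ε)⁻¹ •
      (rlIntegral ε (fun r => Φ r x) (s - t) - rlIntegral ε (fun r => Φ r x) s) := by
    rw [sub_apply, hk x _ (by linarith [le_abs_self t]), hk x s hs, smul_sub]
    rfl
  rw [hkx, norm_smul, Real.norm_of_nonneg hΓ.le, neg_div]
  calc _ ≤ (Real.Gamma ε)⁻¹ * (2 * (4 / (1 - (1 / 2 + ε)) + 3 / ε) * (A₀ * ‖x‖)
          * (|t| / s) ^ ε * s ^ (-(1 / 2 : ℝ))) := by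
        gcongr
        exact norm_rlIntegral_sub_rlIntegral_le_of_abs_le_half hε (by linarith) (by norm_num)
          (by linarith) (hΦm x).aestronglyMeasurable hΦx hs ht
    _ = _ := by ring
end
end

section
/- Let X be a Banach space, let Y be a Hilbert space, let d ≥ 1 and p ∈ [2,∞), and let k : ℝ^d → 𝓛(X,Y) be strongly measurable; set K(s,t) := k(s−t). Suppose there exists A > 0 such that the weak L^p bound λ·|{ s ∈ ℝ^d : (∫_{ℝ^d} ‖k(s−t)f(t)‖_Y² dt)^{1/2} > λ }|^{1/p} ≤ A·‖f‖_{L^p(ℝ^d;X)} holds for every f ∈ L^p(ℝ^d;X) and every λ > 0. Then there exists a constant C depending only on d such that (∫_{ℝ^d} ‖k(t)x‖_Y² dt)^{1/2} ≤ C·A·‖x‖_X for every x ∈ X. -/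
open MeasureTheory ENNReal Metric Set

noncomputable section

/-!
Test the weak bound on `f = 𝟙_{B(0,2r)} x`. For `s ∈ B(0,r)` the ball `B(s,2r)` contains `B(0,r)`,
so `S f(s) ≥ (∫_{B(0,r)} ‖k(u)x‖² du)^{1/2}` on all of `B(0,r)`, while
`‖f‖_p = ‖x‖ |B(0,2r)|^{1/p} = 2^{d/p} ‖x‖ |B(0,r)|^{1/p}`. Cancelling `|B(0,r)|^{1/p}` bounds the
square integral of `k(·)x` over every ball by `(2^d A ‖x‖)²`; let `r → ∞`.
-/

theorem lintegral_le_of_forall_setLIntegral_ball_le {α : Type*} [PseudoMetricSpace α]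
    [MeasurableSpace α] (μ : Measure α) (c : α) {g : α → ℝ≥0∞} {B : ℝ≥0∞}
    (h : ∀ r : ℝ, 0 < r → ∫⁻ u in ball c r, g u ∂μ ≤ B) : ∫⁻ u, g u ∂μ ≤ B := by
  have hmono : Monotone fun n : ℕ => ball c ((n : ℝ) + 1) := fun m n hmn =>
    ball_subset_ball (by gcongr)
  rw [← setLIntegral_univ, ← iUnion_ball_nat_succ c,
    setLIntegral_iUnion_of_directed _ hmono.directed_le]
  exact iSup_le fun n => h _ (by positivity)

section ConvolutionSquareFunction

variable {d : ℕ} {X Y : Type} [NormedAddCommGroup X] [NormedSpace ℝ X]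
  [NormedAddCommGroup Y] [NormedSpace ℝ Y]

theorem sqFn_conv_indicator_ball (k : Ed d → X →L[ℝ] Y) (x : X) (R : ℝ) (s : Ed d) :
    sqFn (fun s t => k (s - t)) ((ball (0 : Ed d) R).indicator fun _ => x) s
      = (∫⁻ u in ball s R, (‖k u x‖₊ : ℝ≥0∞) ^ (2:ℝ)) ^ ((1:ℝ)/2) := by
  have hmem : ∀ t : Ed d, s - t ∈ ball s R ↔ t ∈ ball 0 R := by
    simp [mem_ball, dist_eq_norm]
  have hpt : ∀ t : Ed d,
      (‖k (s - t) ((ball (0 : Ed d) R).indicator (fun _ => x) t)‖₊ : ℝ≥0∞) ^ (2:ℝ)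
        = (ball s R).indicator (fun u => (‖k u x‖₊ : ℝ≥0∞) ^ (2:ℝ)) (s - t) := by
    intro t
    by_cases ht : t ∈ ball (0 : Ed d) R
    · rw [indicator_of_mem ht, indicator_of_mem ((hmem t).mpr ht)]
    · rw [indicator_of_notMem ht, indicator_of_notMem (mt (hmem t).mp ht)]
      simp
  unfold sqFn
  simp_rw [hpt]
  rw [(Measure.measurePreserving_sub_left volume s).lintegral_comp_emb
    (MeasurableEquiv.subLeft s).measurableEmbedding, lintegral_indicator measurableSet_ball]

theorem sqrt_setLIntegral_ball_le_of_weakBdd {k : Ed d → X →L[ℝ] Y} {p A : ℝ} (hp : 1 ≤ p)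
    (hA : 0 ≤ A) (hw : weakBdd (fun s t => k (s - t)) p A) (x : X) {r : ℝ} (hr : 0 < r) :
    (∫⁻ u in ball (0 : Ed d) r, (‖k u x‖₊ : ℝ≥0∞) ^ (2:ℝ)) ^ ((1:ℝ)/2)
      ≤ ENNReal.ofReal (2 ^ d * A * ‖x‖) := by
  refine le_of_forall_pos_nnreal_lt fun lam hlam hlt => ?_
  set f : Ed d → X := (ball (0 : Ed d) (2 * r)).indicator fun _ => x
  set V := volume (ball (0 : Ed d) r) ^ ((1:ℝ)/p)
  have hp0 : 0 < p := by linarith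
  have hlevel : ball (0 : Ed d) r
      ⊆ {s | ENNReal.ofReal lam < sqFn (fun s t => k (s - t)) f s} := by
    intro s hs
    rw [mem_ofPred_eq, sqFn_conv_indicator_ball, ofReal_coe_nnreal]
    refine hlt.trans_le (rpow_le_rpow (lintegral_mono_set (ball_subset_ball' ?_)) (by norm_num))
    rw [dist_comm]
    linarith [mem_ball.mp hs]
  have hnorm : eLpNorm f (ENNReal.ofReal p) volume
      = ‖x‖ₑ * (ENNReal.ofReal (2 ^ d) * volume (ball (0 : Ed d) r)) ^ ((1:ℝ)/p) := by
    rw [eLpNorm_indicator_const measurableSet_ball (by simpa using hp0) ofReal_ne_top,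
      toReal_ofReal hp0.le, Measure.addHaar_ball_mul_of_pos volume 0 two_pos,
      finrank_euclideanSpace_fin]
  have hdilate : ENNReal.ofReal (2 ^ d) ^ ((1:ℝ)/p) ≤ ENNReal.ofReal (2 ^ d) :=
    calc ENNReal.ofReal (2 ^ d) ^ ((1:ℝ)/p)
        ≤ ENNReal.ofReal (2 ^ d) ^ (1:ℝ) :=
          rpow_le_rpow_of_exponent_le (one_le_ofReal.mpr (one_le_pow₀ one_le_two))
            ((div_le_one hp0).mpr hp)
      _ = ENNReal.ofReal (2 ^ d) := rpow_one _
  have hscaled : ENNReal.ofReal lam * V ≤ ENNReal.ofReal (2 ^ d * A * ‖x‖) * V :=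
    calc ENNReal.ofReal lam * V
        ≤ ENNReal.ofReal lam
            * volume {s | ENNReal.ofReal lam < sqFn (fun s t => k (s - t)) f s} ^ ((1:ℝ)/p) :=
          mul_le_mul' le_rfl (rpow_le_rpow (measure_mono hlevel) (by positivity))
      _ ≤ ENNReal.ofReal A * eLpNorm f (ENNReal.ofReal p) volume :=
          hw f ((stronglyMeasurable_const.indicator measurableSet_ball).aestronglyMeasurable)
            lam hlam
      _ ≤ ENNReal.ofReal A * (‖x‖ₑ * (ENNReal.ofReal (2 ^ d) * V)) := by
          rw [hnorm, mul_rpow_of_nonneg _ _ (by positivity)]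
          gcongr
      _ = ENNReal.ofReal (2 ^ d * A * ‖x‖) * V := by
          rw [ofReal_mul (by positivity), ofReal_mul (by positivity), ofReal_norm]
          ring
  have hV0 : V ≠ 0 := (rpow_pos (measure_ball_pos _ _ hr) measure_ball_lt_top.ne).ne'
  have hVtop : V ≠ ⊤ := rpow_ne_top_of_nonneg (by positivity) measure_ball_lt_top.ne
  simpa using (ENNReal.mul_le_mul_iff_left hV0 hVtop).mp hscaled

end ConvolutionSquareFunction

theorem statement3_general (d : ℕ) :
    ∃ C : ℝ, 0 < C ∧
      ∀ (X : Type) [NormedAddCommGroup X] [NormedSpace ℝ X] [CompleteSpace X]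
        (Y : Type) [NormedAddCommGroup Y] [InnerProductSpace ℝ Y] [CompleteSpace Y]
        (p A : ℝ), 2 ≤ p → 0 < A →
        ∀ k : Ed d → (X →L[ℝ] Y),
        (∀ x : X, StronglyMeasurable fun t => k t x) →
        weakBdd (fun s t : Ed d => k (s - t)) p A →
        ∀ x : X, (∫⁻ t, (‖k t x‖₊ : ℝ≥0∞) ^ (2:ℝ)) ^ ((1:ℝ)/2)
          ≤ ENNReal.ofReal (C * A * ‖x‖) := by
  refine ⟨2 ^ d, by positivity, ?_⟩
  intro X _ _ _ Y _ _ _ p A hp hA k _ hw x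
  rw [one_div, rpow_inv_le_iff two_pos]
  refine lintegral_le_of_forall_setLIntegral_ball_le volume 0 fun r hr => ?_
  rw [← rpow_inv_le_iff two_pos, ← one_div]
  exact sqrt_setLIntegral_ball_le_of_weakBdd (by linarith) hA.le hw x hr

/-- necessary condition for weak `L^p`-boundedness of a convolution-type
square function operator with Hilbert target: `(∫ ‖k(t)x‖²dt)^{1/2} ≤ C(d)·A·‖x‖`. -/
theorem statement3 (d : ℕ) (hd : 1 ≤ d) :
    ∃ C : ℝ, 0 < C ∧
      ∀ (X : Type) [NormedAddCommGroup X] [NormedSpace ℝ X] [CompleteSpace X]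
        (Y : Type) [NormedAddCommGroup Y] [InnerProductSpace ℝ Y] [CompleteSpace Y]
        (p A : ℝ), 2 ≤ p → 0 < A →
        ∀ k : Ed d → (X →L[ℝ] Y),
        (∀ x : X, StronglyMeasurable fun t => k t x) →
        weakBdd (fun s t : Ed d => k (s - t)) p A →
        ∀ x : X, (∫⁻ t, (‖k t x‖₊ : ℝ≥0∞) ^ (2:ℝ)) ^ ((1:ℝ)/2)
          ≤ ENNReal.ofReal (C * A * ‖x‖) :=
  statement3_general d
end
end

section
/- Let X be a Hilbert space, let d ≥ 1 and p ∈ [2,∞), and let k : ℝ^d → ℂ be measurable. Then there exists C > 0 such that ‖ s ↦ (∫_{ℝ^d} |k(s−t)|²‖f(t)‖_X² dt)^{1/2} ‖_{L^p(ℝ^d)} ≤ C·‖f‖_{L^p(ℝ^d;X)} for all f ∈ L^p(ℝ^d;X) if and only if k ∈ L²(ℝ^d); moreover, if k ∈ L²(ℝ^d) then the estimate holds with C = ‖k‖_{L²(ℝ^d)}. -/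
/-!
Writing `g = |k|²` and `h = ‖f‖²`, the square of the square function is the convolution `g ⋆ h`,
so sufficiency is Young's inequality `‖g ⋆ h‖_{p/2} ≤ ‖g‖₁ ‖h‖_{p/2}` (which needs `p ≥ 2`),
and it gives the constant `‖k‖₂`. For necessity, test the estimate on `f = 1_{B(0,2r)} x`:
for `s ∈ B(0,r)` the inner integral is at least `‖x‖² ∫_{B(0,r)} |k|²`, while
`|B(0,2r)| = 2^d |B(0,r)|`, so `∫_{B(0,r)} |k|² ≤ C² 2^{2d/p}` uniformly in `r`.
-/

open MeasureTheory ENNReal Metric Set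

noncomputable section

theorem rpow_lintegral_mul_le_lintegral_rpow_mul_lintegral_mul_rpow {α : Type*} [MeasurableSpace α]
    {μ : Measure α} {q : ℝ} (hq : 1 ≤ q) {w H : α → ℝ≥0∞} (hw : AEMeasurable w μ)
    (hH : AEMeasurable H μ) :
    (∫⁻ a, w a * H a ∂μ) ^ q ≤ (∫⁻ a, w a ∂μ) ^ (q - 1) * ∫⁻ a, w a * H a ^ q ∂μ := by
  have hq0 : 0 < q := by linarith
  have hinv : 0 ≤ 1 - 1 / q := by
    rw [sub_nonneg, div_le_one hq0]; exact hq
  -- Hölder with exponents `q / (q - 1)` and `q`, splitting the weight `w` between the factors.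
  have holder := ENNReal.lintegral_mul_norm_pow_le (g := fun a => w a * H a ^ q) hw
    (hw.mul (hH.pow_const q)) hinv (by positivity : (0:ℝ) ≤ 1 / q) (sub_add_cancel _ _)
  have split : ∀ a, w a ^ (1 - 1 / q) * (w a * H a ^ q) ^ (1 / q) = w a * H a := fun a => by
    rw [ENNReal.mul_rpow_of_nonneg _ _ (by positivity), ← ENNReal.rpow_mul,
      mul_one_div_cancel hq0.ne', ENNReal.rpow_one, ← mul_assoc,
      ← ENNReal.rpow_add_of_nonneg _ _ hinv (by positivity), sub_add_cancel, ENNReal.rpow_one]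
  rw [lintegral_congr split] at holder
  calc (∫⁻ a, w a * H a ∂μ) ^ q
      ≤ ((∫⁻ a, w a ∂μ) ^ (1 - 1 / q) * (∫⁻ a, w a * H a ^ q ∂μ) ^ (1 / q)) ^ q :=
        ENNReal.rpow_le_rpow holder hq0.le
    _ = (∫⁻ a, w a ∂μ) ^ (q - 1) * ∫⁻ a, w a * H a ^ q ∂μ := by
        rw [ENNReal.mul_rpow_of_nonneg _ _ hq0.le, ← ENNReal.rpow_mul, ← ENNReal.rpow_mul,
          one_div_mul_cancel hq0.ne', ENNReal.rpow_one, sub_mul, one_div_mul_cancel hq0.ne',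
          one_mul]

theorem lintegral_lconvolution_rpow_le {G : Type*} {mG : MeasurableSpace G} [AddGroup G]
    [MeasurableAdd₂ G] [MeasurableNeg G] {μ : Measure G} [SFinite μ] [μ.IsAddLeftInvariant]
    {q : ℝ} (hq : 1 ≤ q) {g h : G → ℝ≥0∞} (hg : Measurable g) (hh : Measurable h) :
    ∫⁻ x, (g ⋆ₗ[μ] h) x ^ q ∂μ ≤ (∫⁻ y, g y ∂μ) ^ q * ∫⁻ x, h x ^ q ∂μ := by
  calc ∫⁻ x, (g ⋆ₗ[μ] h) x ^ q ∂μ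
      ≤ ∫⁻ x, (∫⁻ y, g y ∂μ) ^ (q - 1) * ∫⁻ y, g y * h (-y + x) ^ q ∂μ ∂μ :=
        lintegral_mono fun x => rpow_lintegral_mul_le_lintegral_rpow_mul_lintegral_mul_rpow hq
          hg.aemeasurable (by fun_prop)
    _ = (∫⁻ y, g y ∂μ) ^ (q - 1) * ∫⁻ y, g y * ∫⁻ x, h x ^ q ∂μ ∂μ := by
        rw [lintegral_const_mul _ (by fun_prop), lintegral_lintegral_swap (by fun_prop)]
        congr 1
        refine lintegral_congr fun y => ?_
        rw [lintegral_const_mul _ (by fun_prop), lintegral_add_left_eq_self (h · ^ q) (-y)]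
    _ = (∫⁻ y, g y ∂μ) ^ q * ∫⁻ x, h x ^ q ∂μ := by
        rw [lintegral_mul_const _ hg, ← mul_assoc]
        congr 1
        nth_rw 2 [← ENNReal.rpow_one (∫⁻ y, g y ∂μ)]
        rw [← ENNReal.rpow_add_of_nonneg _ _ (by linarith) zero_le_one, sub_add_cancel]

section SquareFunction

variable {G E X : Type*} {mG : MeasurableSpace G} [AddCommGroup G] [MeasurableAdd₂ G]
  [MeasurableNeg G] {μ : Measure G} [SFinite μ] [μ.IsAddLeftInvariant] [μ.IsNegInvariant]
  [NormedAddCommGroup E] [MeasurableSpace E] [OpensMeasurableSpace E] [NormedAddCommGroup X]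

theorem lintegral_conv_sq_rpow_le_eLpNorm_mul_eLpNorm {p : ℝ} (hp : 2 ≤ p) {k : G → E}
    (hk : Measurable k) {f : G → X} (hf : AEStronglyMeasurable f μ) :
    (∫⁻ s, (∫⁻ t, ‖k (s - t)‖ₑ ^ (2:ℝ) * ‖f t‖ₑ ^ (2:ℝ) ∂μ) ^ (p / 2) ∂μ) ^ (1 / p)
      ≤ eLpNorm k 2 μ * eLpNorm f (ENNReal.ofReal p) μ := by
  have hp0 : 0 < p := by linarith
  set g : G → ℝ≥0∞ := fun u => ‖k u‖ₑ ^ (2:ℝ)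
  set h : G → ℝ≥0∞ := fun t => ‖hf.mk f t‖ₑ ^ (2:ℝ)
  have inner_eq : ∀ s, ∫⁻ t, ‖k (s - t)‖ₑ ^ (2:ℝ) * ‖f t‖ₑ ^ (2:ℝ) ∂μ = (g ⋆ₗ[μ] h) s := by
    intro s
    rw [lconvolution_comm, lconvolution_def]
    refine lintegral_congr_ae (hf.ae_eq_mk.mono fun t ht => ?_)
    simp only [g, h, ht, neg_add_eq_sub, mul_comm]
  have young := lintegral_lconvolution_rpow_le (μ := μ) (by linarith : 1 ≤ p / 2)
    (hk.enorm.pow_const (2:ℝ)) (hf.stronglyMeasurable_mk.enorm.pow_const (2:ℝ))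
  have norm_k : eLpNorm k 2 μ = (∫⁻ u, g u ∂μ) ^ (1 / 2 : ℝ) := by
    simp [eLpNorm_eq_lintegral_rpow_enorm_toReal, g]
  have norm_f : eLpNorm f (ENNReal.ofReal p) μ = (∫⁻ t, h t ^ (p / 2) ∂μ) ^ (1 / p) := by
    rw [eLpNorm_congr_ae hf.ae_eq_mk, eLpNorm_eq_lintegral_rpow_enorm_toReal (by simpa using hp0)
      ENNReal.ofReal_ne_top, ENNReal.toReal_ofReal hp0.le]
    simp only [h, ← ENNReal.rpow_mul]
    rw [mul_div_cancel₀ p two_ne_zero]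
  calc (∫⁻ s, (∫⁻ t, ‖k (s - t)‖ₑ ^ (2:ℝ) * ‖f t‖ₑ ^ (2:ℝ) ∂μ) ^ (p / 2) ∂μ) ^ (1 / p)
      ≤ ((∫⁻ u, g u ∂μ) ^ (p / 2) * ∫⁻ t, h t ^ (p / 2) ∂μ) ^ (1 / p) := by
        simp only [inner_eq]
        exact ENNReal.rpow_le_rpow young (by positivity)
    _ = eLpNorm k 2 μ * eLpNorm f (ENNReal.ofReal p) μ := by
        rw [norm_k, norm_f, ENNReal.mul_rpow_of_nonneg _ _ (by positivity), ← ENNReal.rpow_mul]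
        congr 2
        field_simp

end SquareFunction

theorem setLIntegral_ball_mul_le_lintegral_sub_mul_indicator {G : Type*} [NormedAddCommGroup G]
    [MeasurableSpace G] [BorelSpace G] {μ : Measure G} [μ.IsAddLeftInvariant] [μ.IsNegInvariant]
    (g : G → ℝ≥0∞) (c : ℝ≥0∞) {r : ℝ} {s : G} (hs : s ∈ ball 0 r) :
    (∫⁻ u in ball 0 r, g u ∂μ) * c
      ≤ ∫⁻ t, g (s - t) * (ball 0 (2 * r)).indicator (fun _ => c) t ∂μ := by
  set ind := (ball (0 : G) (2 * r)).indicator fun _ => c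
  have substitute : ∫⁻ u, g u * ind (s - u) ∂μ = ∫⁻ t, g (s - t) * ind t ∂μ := by
    simpa only [_root_.sub_sub_cancel] using
      (lintegral_sub_left_eq_self (μ := μ) (fun u => g u * ind (s - u)) s).symm
  rw [← substitute, ← lintegral_indicator measurableSet_ball]
  refine (lintegral_mul_const_le _ _).trans (lintegral_mono fun u => ?_)
  by_cases hu : u ∈ ball 0 r
  · have hsu : s - u ∈ ball 0 (2 * r) := by
      rw [mem_ball_zero_iff] at hs hu ⊢
      calc ‖s - u‖ ≤ ‖s‖ + ‖u‖ := norm_sub_le s u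
        _ < 2 * r := by linarith
    rw [indicator_of_mem hu, show ind (s - u) = c from indicator_of_mem hsu _]
  · simp [indicator_of_notMem hu]

section Necessity

variable {E F X : Type*} [NormedAddCommGroup E] [NormedSpace ℝ E] [FiniteDimensional ℝ E]
  [MeasurableSpace E] [BorelSpace E] {μ : Measure E} [μ.IsAddHaarMeasure]
  [NormedAddCommGroup F] [NormedAddCommGroup X] {p C : ℝ} {k : E → F}

theorem setLIntegral_ball_enorm_sq_le_of_conv_sq_bound (hp : 0 < p)
    (hbound : ∀ f : E → X, AEStronglyMeasurable f μ →
      (∫⁻ s, (∫⁻ t, ‖k (s - t)‖ₑ ^ (2:ℝ) * ‖f t‖ₑ ^ (2:ℝ) ∂μ) ^ (p / 2) ∂μ) ^ (1 / p)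
        ≤ ENNReal.ofReal C * eLpNorm f (ENNReal.ofReal p) μ)
    {x : X} (hx : x ≠ 0) {r : ℝ} (hr : 0 < r) :
    (∫⁻ u in ball 0 r, ‖k u‖ₑ ^ (2:ℝ) ∂μ) ^ (1 / 2 : ℝ)
      ≤ ENNReal.ofReal C * ENNReal.ofReal (2 ^ Module.finrank ℝ E) ^ (1 / p) := by
  set A := ∫⁻ u in ball 0 r, ‖k u‖ₑ ^ (2:ℝ) ∂μ
  set V := μ (ball 0 r)
  set f : E → X := (ball 0 (2 * r)).indicator fun _ => x
  have norm_f_sq : ∀ t, ‖f t‖ₑ ^ (2:ℝ) = (ball 0 (2 * r)).indicator (fun _ => ‖x‖ₑ ^ (2:ℝ)) t := by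
    intro t
    by_cases ht : t ∈ ball (0 : E) (2 * r) <;> simp [f, ht]
  have pointwise : ∀ s ∈ ball (0 : E) r,
      A * ‖x‖ₑ ^ (2:ℝ) ≤ ∫⁻ t, ‖k (s - t)‖ₑ ^ (2:ℝ) * ‖f t‖ₑ ^ (2:ℝ) ∂μ := fun s hs => by
    simpa only [norm_f_sq] using
      setLIntegral_ball_mul_le_lintegral_sub_mul_indicator (μ := μ) _ (‖x‖ₑ ^ (2:ℝ)) hs
  have lower : A ^ (1 / 2 : ℝ) * ‖x‖ₑ * V ^ (1 / p)
      ≤ (∫⁻ s, (∫⁻ t, ‖k (s - t)‖ₑ ^ (2:ℝ) * ‖f t‖ₑ ^ (2:ℝ) ∂μ) ^ (p / 2) ∂μ) ^ (1 / p) := by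
    have integrated : (A * ‖x‖ₑ ^ (2:ℝ)) ^ (p / 2) * V
        ≤ ∫⁻ s, (∫⁻ t, ‖k (s - t)‖ₑ ^ (2:ℝ) * ‖f t‖ₑ ^ (2:ℝ) ∂μ) ^ (p / 2) ∂μ := by
      rw [← setLIntegral_const]
      exact (setLIntegral_mono' measurableSet_ball fun s hs =>
        ENNReal.rpow_le_rpow (pointwise s hs) (by positivity)).trans
          (setLIntegral_le_lintegral _ _)
    refine le_of_eq_of_le ?_ (ENNReal.rpow_le_rpow integrated (by positivity : 0 ≤ 1 / p))
    rw [ENNReal.mul_rpow_of_nonneg _ _ (by positivity), ← ENNReal.rpow_mul,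
      ENNReal.mul_rpow_of_nonneg _ _ (by positivity), ← ENNReal.rpow_mul]
    congr 3
    · field_simp
    · rw [show (2:ℝ) * (p / 2 * (1 / p)) = 1 by field_simp, ENNReal.rpow_one]
  have upper : eLpNorm f (ENNReal.ofReal p) μ
      = ‖x‖ₑ * ENNReal.ofReal (2 ^ Module.finrank ℝ E) ^ (1 / p) * V ^ (1 / p) := by
    rw [eLpNorm_indicator_const measurableSet_ball (by simpa using hp) ENNReal.ofReal_ne_top,
      ENNReal.toReal_ofReal hp.le, Measure.addHaar_ball_mul_of_pos μ 0 two_pos,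
      ENNReal.mul_rpow_of_nonneg _ _ (by positivity), mul_assoc]
  have hf : AEStronglyMeasurable f μ :=
    (stronglyMeasurable_const.indicator measurableSet_ball).aestronglyMeasurable
  have hxV_ne_zero : ‖x‖ₑ * V ^ (1 / p) ≠ 0 :=
    mul_ne_zero (enorm_ne_zero.mpr hx)
      (ENNReal.rpow_pos (measure_ball_pos μ 0 hr) measure_ball_lt_top.ne).ne'
  have hxV_ne_top : ‖x‖ₑ * V ^ (1 / p) ≠ ∞ :=
    ENNReal.mul_ne_top enorm_ne_top
      (ENNReal.rpow_ne_top_of_nonneg (by positivity) measure_ball_lt_top.ne)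
  rw [← ENNReal.mul_le_mul_iff_left hxV_ne_zero hxV_ne_top]
  calc A ^ (1 / 2 : ℝ) * (‖x‖ₑ * V ^ (1 / p)) = A ^ (1 / 2 : ℝ) * ‖x‖ₑ * V ^ (1 / p) := by ring
    _ ≤ ENNReal.ofReal C * eLpNorm f (ENNReal.ofReal p) μ := lower.trans (hbound f hf)
    _ = _ := by rw [upper]; ring

theorem memLp_two_of_conv_sq_bound [Nontrivial X] (hp : 0 < p) (hk : AEStronglyMeasurable k μ)
    (hbound : ∀ f : E → X, AEStronglyMeasurable f μ →
      (∫⁻ s, (∫⁻ t, ‖k (s - t)‖ₑ ^ (2:ℝ) * ‖f t‖ₑ ^ (2:ℝ) ∂μ) ^ (p / 2) ∂μ) ^ (1 / p)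
        ≤ ENNReal.ofReal C * eLpNorm f (ENNReal.ofReal p) μ) :
    MemLp k 2 μ := by
  obtain ⟨x, hx⟩ := exists_ne (0 : X)
  set B := ENNReal.ofReal C * ENNReal.ofReal (2 ^ Module.finrank ℝ E) ^ (1 / p)
  have ball_bound : ∀ n : ℕ, ∫⁻ u in ball 0 (n + 1), ‖k u‖ₑ ^ (2:ℝ) ∂μ ≤ B ^ (2:ℝ) := fun n =>
    (ENNReal.rpow_inv_le_iff two_pos).mp <| by
      simpa only [B, one_div] using
        setLIntegral_ball_enorm_sq_le_of_conv_sq_bound hp hbound hx n.cast_add_one_pos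
  have total : ∫⁻ u, ‖k u‖ₑ ^ (2:ℝ) ∂μ ≤ B ^ (2:ℝ) := by
    rw [← setLIntegral_univ, ← iUnion_ball_nat_succ 0, setLIntegral_iUnion_of_directed _
      (Monotone.directed_le fun m n hmn => ball_subset_ball (by gcongr))]
    exact iSup_le ball_bound
  refine ⟨hk, (eLpNorm_lt_top_iff_lintegral_rpow_enorm_lt_top two_ne_zero ofNat_ne_top).mpr ?_⟩
  refine total.trans_lt (ENNReal.rpow_lt_top_of_nonneg zero_le_two ?_)
  exact ENNReal.mul_ne_top ofReal_ne_top
    (ENNReal.rpow_ne_top_of_nonneg (by positivity) ofReal_ne_top)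

end Necessity

theorem statement5_general {X : Type} [NormedAddCommGroup X] [Nontrivial X]
    (d : ℕ) (p : ℝ) (hp : 2 ≤ p) (k : Ed d → ℂ) (hk : Measurable k) :
    ((∃ C : ℝ, 0 < C ∧ ∀ f : Ed d → X, AEStronglyMeasurable f volume →
        (∫⁻ s, (∫⁻ t, (‖k (s - t)‖₊ : ℝ≥0∞) ^ (2:ℝ) * (‖f t‖₊ : ℝ≥0∞) ^ (2:ℝ)) ^ (p/2))
            ^ ((1:ℝ)/p)
          ≤ ENNReal.ofReal C * eLpNorm f (ENNReal.ofReal p) volume)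
      ↔ MemLp k 2 (volume : Measure (Ed d))) ∧
    (MemLp k 2 (volume : Measure (Ed d)) →
      ∀ f : Ed d → X, AEStronglyMeasurable f volume →
        (∫⁻ s, (∫⁻ t, (‖k (s - t)‖₊ : ℝ≥0∞) ^ (2:ℝ) * (‖f t‖₊ : ℝ≥0∞) ^ (2:ℝ)) ^ (p/2))
            ^ ((1:ℝ)/p)
          ≤ eLpNorm k 2 volume * eLpNorm f (ENNReal.ofReal p) volume) := by
  have bound := fun (f : Ed d → X) (hf : AEStronglyMeasurable f volume) =>
    lintegral_conv_sq_rpow_le_eLpNorm_mul_eLpNorm hp hk hf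
  refine ⟨⟨fun ⟨C, _, hC⟩ => memLp_two_of_conv_sq_bound (by linarith) hk.aestronglyMeasurable hC,
    fun hk2 => ?_⟩, fun _ => bound⟩
  refine ⟨(eLpNorm k 2 volume).toReal + 1, by positivity, fun f hf => (bound f hf).trans ?_⟩
  gcongr
  calc eLpNorm k 2 volume = ENNReal.ofReal (eLpNorm k 2 volume).toReal :=
        (ofReal_toReal hk2.eLpNorm_ne_top).symm
    _ ≤ ENNReal.ofReal ((eLpNorm k 2 volume).toReal + 1) := ofReal_le_ofReal (by linarith)

/-- for a Hilbert space `X` and a scalar convolution kernel `k`, the square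
function operator is `L^p`-bounded iff `k ∈ L²(ℝ^d)`; in that case `C = ‖k‖_{L²}` works. -/
theorem statement5 {X : Type} [NormedAddCommGroup X] [InnerProductSpace ℝ X]
    [CompleteSpace X] [Nontrivial X]
    (d : ℕ) (hd : 1 ≤ d) (p : ℝ) (hp : 2 ≤ p) (k : Ed d → ℂ) (hk : Measurable k) :
    ((∃ C : ℝ, 0 < C ∧ ∀ f : Ed d → X, AEStronglyMeasurable f volume →
        (∫⁻ s, (∫⁻ t, (‖k (s - t)‖₊ : ℝ≥0∞) ^ (2:ℝ) * (‖f t‖₊ : ℝ≥0∞) ^ (2:ℝ)) ^ (p/2))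
            ^ ((1:ℝ)/p)
          ≤ ENNReal.ofReal C * eLpNorm f (ENNReal.ofReal p) volume)
      ↔ MemLp k 2 (volume : Measure (Ed d))) ∧
    (MemLp k 2 (volume : Measure (Ed d)) →
      ∀ f : Ed d → X, AEStronglyMeasurable f volume →
        (∫⁻ s, (∫⁻ t, (‖k (s - t)‖₊ : ℝ≥0∞) ^ (2:ℝ) * (‖f t‖₊ : ℝ≥0∞) ^ (2:ℝ)) ^ (p/2))
            ^ ((1:ℝ)/p)
          ≤ eLpNorm k 2 volume * eLpNorm f (ENNReal.ofReal p) volume) :=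
  statement5_general d p hp k hk
end
end

section
/- Let d ≥ 1, T ∈ (0,∞], let D ⊆ ℝ^d be measurable, let ε ∈ (0,1] and A₀ > 0, and let K : (0,T) × (0,T) × D × D → ℂ be measurable. Denote by |(t,x)|_{(2,1)} := max(|t|^{1/2}, |x|) the parabolic norm on ℝ × ℝ^d. Assume that |K(t,s,x,y) − K(t',s,x',y)| ≤ A₀ · |(t−t', x−x')|_{(2,1)}^{ε} / |(t−s, x−y)|_{(2,1)}^{ε+d+1} whenever |(t−t', x−x')|_{(2,1)} ≤ ½·|(t−s, x−y)|_{(2,1)}. Then there exists a constant C depending only on ε and d such that for all (t,x), (t',x') ∈ (0,T) × D: ( ∫₀^T ( ∫_{I(s)} |K(t,s,x,y) − K(t',s,x',y)| dy )² ds )^{1/2} ≤ C·A₀, where I(s) := { y ∈ D : |(t−t', x−x')|_{(2,1)} ≤ ½·|(t−s, x−y)|_{(2,1)} }. -/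
open MeasureTheory ENNReal Metric Set

noncomputable section

/-- The parabolic norm `|(t,x)|_{(2,1)} = max(|t|^{1/2}, |x|)` on `ℝ × ℝ^d`. -/
def pnorm {d : ℕ} (t : ℝ) (x : Ed d) : ℝ := max (Real.sqrt |t|) ‖x‖

/-! On the region of integration `r := |(t-s, x-y)|_{(2,1)}` dominates `2δ`, where
`δ := |(t-t', x-x')|_{(2,1)}`, as well as `|t-s|^{1/2}` and `|x-y|`. Hence with
`b(s) := max(4δ², |t-s|)^{1/2}` the regularity hypothesis gives
`|K(t,s,x,y) - K(t',s,x',y)| ≤ A₀ δ^ε max(b(s), |x-y|)^{-(ε+d+1)}`.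
Rescaling by `b(s)` in `ℝ^d` bounds the `y`-integral by `A₀ δ^ε b(s)^{-(ε+1)}` times
`∫ max(1,|z|)^{-(ε+d+1)} dz`; squaring and rescaling by `4δ²` in `ℝ` bounds the `s`-integral
by `A₀² δ^{2ε} (4δ²)^{-ε} ∫ max(1,|u|)^{-(ε+1)} du ≤ A₀² ∫ max(1,|u|)^{-(ε+1)} du`.
Both truncated power integrals are finite since their exponents exceed the dimension. -/

section TruncatedPower

variable {E : Type*} [NormedAddCommGroup E] [NormedSpace ℝ E] [FiniteDimensional ℝ E]
  [MeasurableSpace E] [BorelSpace E] (μ : Measure E) [μ.IsAddHaarMeasure]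

def truncPowIntegral (p : ℝ) : ℝ≥0∞ := ∫⁻ z, ENNReal.ofReal (max 1 ‖z‖ ^ (-p)) ∂μ

theorem truncPowIntegral_lt_top {p : ℝ} (hp : (Module.finrank ℝ E : ℝ) < p) :
    truncPowIntegral μ p < ∞ := by
  have hp0 : 0 ≤ p := (Nat.cast_nonneg _).trans hp.le
  have hle : ∀ z : E, ENNReal.ofReal (max 1 ‖z‖ ^ (-p))
      ≤ ENNReal.ofReal (2 ^ p) * ENNReal.ofReal ((1 + ‖z‖) ^ (-p)) := fun z => by
    rw [← ENNReal.ofReal_mul (by positivity)]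
    refine ENNReal.ofReal_le_ofReal ?_
    calc max 1 ‖z‖ ^ (-p) ≤ ((1 + ‖z‖) / 2) ^ (-p) :=
          Real.rpow_le_rpow_of_nonpos (by positivity)
            (by linarith [le_max_left 1 ‖z‖, le_max_right 1 ‖z‖]) (neg_nonpos.2 hp0)
      _ = 2 ^ p * (1 + ‖z‖) ^ (-p) := by
          rw [Real.div_rpow (by positivity) zero_le_two, Real.rpow_neg zero_le_two,
            div_eq_mul_inv, inv_inv, mul_comm]
  calc truncPowIntegral μ p
      ≤ ∫⁻ z, ENNReal.ofReal (2 ^ p) * ENNReal.ofReal ((1 + ‖z‖) ^ (-p)) ∂μ :=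
        lintegral_mono hle
    _ < ∞ := by
        rw [lintegral_const_mul' _ _ ENNReal.ofReal_ne_top]
        exact ENNReal.mul_lt_top ENNReal.ofReal_lt_top (finite_integral_one_add_norm hp)

theorem truncPowIntegral_pos (p : ℝ) : 0 < truncPowIntegral μ p := by
  refine pos_iff_ne_zero.2 fun h => ?_
  have hcont : Continuous fun z : E => ENNReal.ofReal (max 1 ‖z‖ ^ (-p)) :=
    ENNReal.continuous_ofReal.comp ((continuous_const.max continuous_norm).rpow_const
      fun z => Or.inl (zero_lt_one.trans_le (le_max_left _ _)).ne')
  have := congrFun ((lintegral_eq_zero_of_isAddLeftInvariant hcont).1 h) 0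
  simp at this

theorem lintegral_max_norm_sub_rpow_neg (x : E) (p : ℝ) {b : ℝ} (hb : 0 < b) :
    ∫⁻ y, ENNReal.ofReal (max b ‖y - x‖ ^ (-p)) ∂μ
      = ENNReal.ofReal (b ^ ((Module.finrank ℝ E : ℝ) - p)) * truncPowIntegral μ p := by
  rw [lintegral_sub_right_eq_self (fun y => ENNReal.ofReal (max b ‖y‖ ^ (-p))) x]
  have hscale : ∀ y : E, max b ‖y‖ = b * max 1 ‖b⁻¹ • y‖ := fun y => by
    rw [norm_smul, Real.norm_eq_abs, abs_of_pos (inv_pos.2 hb), mul_max_of_nonneg _ _ hb.le,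
      mul_one, ← mul_assoc, mul_inv_cancel₀ hb.ne', one_mul]
  have hmeas : Measurable fun z : E => ENNReal.ofReal (max 1 ‖z‖ ^ (-p)) := by fun_prop
  calc ∫⁻ y, ENNReal.ofReal (max b ‖y‖ ^ (-p)) ∂μ
      = ∫⁻ y, ENNReal.ofReal (b ^ (-p))
          * ENNReal.ofReal (max 1 ‖b⁻¹ • y‖ ^ (-p)) ∂μ := by
        refine lintegral_congr fun y => ?_
        rw [hscale, Real.mul_rpow hb.le (zero_le_one.trans (le_max_left _ _)),
          ENNReal.ofReal_mul (by positivity)]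
    _ = ENNReal.ofReal (b ^ (-p)) * (ENNReal.ofReal (b ^ Module.finrank ℝ E)
          * truncPowIntegral μ p) := by
        rw [lintegral_const_mul' _ _ ENNReal.ofReal_ne_top,
          ← lintegral_map hmeas (measurable_const_smul _), Measure.map_addHaar_smul μ
            (inv_ne_zero hb.ne'), lintegral_smul_measure, inv_pow, inv_inv,
          abs_of_pos (by positivity)]
        rfl
    _ = _ := by
        rw [← mul_assoc, ← ENNReal.ofReal_mul (by positivity), ← Real.rpow_natCast,
          ← Real.rpow_add hb, neg_add_eq_sub]

end TruncatedPower

section ParabolicKernel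

variable {d : ℕ}

theorem pnorm_nonneg (τ : ℝ) (z : Ed d) : 0 ≤ pnorm τ z :=
  (Real.sqrt_nonneg _).trans (le_max_left _ _)

theorem pnorm_eq_zero_iff {τ : ℝ} {z : Ed d} : pnorm τ z = 0 ↔ τ = 0 ∧ z = 0 := by
  rw [← (pnorm_nonneg τ z).ge_iff_eq', pnorm, max_le_iff]
  simp [(Real.sqrt_nonneg _).ge_iff_eq']

theorem sqrt_max_le_pnorm {τ δ : ℝ} {z : Ed d} (hδ : 0 ≤ δ) (h : 2 * δ ≤ pnorm τ z) :
    √(max (4 * δ ^ 2) |τ|) ≤ pnorm τ z := by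
  have hr := pnorm_nonneg τ z
  rw [Real.sqrt_le_left hr, max_le_iff]
  constructor
  · nlinarith
  · exact (Real.sqrt_le_left hr).1 (le_max_left _ _)

theorem setLIntegral_pnorm_rpow_neg_le (x : Ed d) (τ : ℝ) {δ p : ℝ} (hδ : 0 < δ)
    (hp : 0 ≤ p) :
    ∫⁻ y in {y | 2 * δ ≤ pnorm τ (x - y)}, ENNReal.ofReal (pnorm τ (x - y) ^ (-p))
      ≤ ENNReal.ofReal (√(max (4 * δ ^ 2) |τ|) ^ ((d : ℝ) - p))
        * truncPowIntegral (volume : Measure (Ed d)) p := by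
  set b := √(max (4 * δ ^ 2) |τ|)
  have hb : 0 < b := Real.sqrt_pos.2 (lt_max_of_lt_left (by positivity))
  calc ∫⁻ y in {y | 2 * δ ≤ pnorm τ (x - y)}, ENNReal.ofReal (pnorm τ (x - y) ^ (-p))
      ≤ ∫⁻ y in {y | 2 * δ ≤ pnorm τ (x - y)},
          ENNReal.ofReal (max b ‖y - x‖ ^ (-p)) := by
        refine setLIntegral_mono (by fun_prop) fun y hy => ENNReal.ofReal_le_ofReal ?_
        refine Real.rpow_le_rpow_of_nonpos (lt_max_of_lt_left hb) (max_le ?_ ?_) (by linarith)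
        · exact sqrt_max_le_pnorm hδ.le hy
        · exact norm_sub_rev y x ▸ le_max_right _ _
    _ ≤ ∫⁻ y, ENNReal.ofReal (max b ‖y - x‖ ^ (-p)) := setLIntegral_le_lintegral _ _
    _ = _ := by
        rw [lintegral_max_norm_sub_rpow_neg volume x p hb, finrank_euclideanSpace_fin]

theorem setLIntegral_enorm_le_of_le_div_pnorm_rpow {F : Type*} [NormedAddCommGroup F]
    (f : Ed d → F) (S : Set (Ed d)) (x : Ed d) (τ : ℝ) {δ A p : ℝ} (hδ : 0 < δ)
    (hp : 0 ≤ p)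
    (hf : ∀ y ∈ S, 2 * δ ≤ pnorm τ (x - y) ∧ ‖f y‖ ≤ A / pnorm τ (x - y) ^ p) :
    ∫⁻ y in S, ‖f y‖ₑ
      ≤ ENNReal.ofReal A * (ENNReal.ofReal (√(max (4 * δ ^ 2) |τ|) ^ ((d : ℝ) - p))
        * truncPowIntegral (volume : Measure (Ed d)) p) := by
  calc ∫⁻ y in S, ‖f y‖ₑ
      ≤ ∫⁻ y in S, ENNReal.ofReal A * ENNReal.ofReal (pnorm τ (x - y) ^ (-p)) := by
        refine setLIntegral_mono (by unfold pnorm; fun_prop) fun y hy => ?_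
        rw [← ofReal_norm, ← ENNReal.ofReal_mul' (Real.rpow_nonneg (pnorm_nonneg _ _) _),
          Real.rpow_neg (pnorm_nonneg _ _), ← div_eq_mul_inv]
        exact ENNReal.ofReal_le_ofReal (hf y hy).2
    _ ≤ ENNReal.ofReal A * ∫⁻ y in {y | 2 * δ ≤ pnorm τ (x - y)},
          ENNReal.ofReal (pnorm τ (x - y) ^ (-p)) := by
        rw [lintegral_const_mul' _ _ ENNReal.ofReal_ne_top]
        gcongr
        exact fun y hy => (hf y hy).1
    _ ≤ _ := by gcongr; exact setLIntegral_pnorm_rpow_neg_le x τ hδ hp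

theorem lintegral_ofReal_sqrt_max_rpow_neg_sq (t : ℝ) {δ : ℝ} (hδ : 0 < δ) (q : ℝ) :
    ∫⁻ s, ENNReal.ofReal (√(max (4 * δ ^ 2) |t - s|) ^ (-q)) ^ 2
      = ENNReal.ofReal ((4 * δ ^ 2) ^ (1 - q)) * truncPowIntegral (volume : Measure ℝ) q := by
  have hsq : ∀ s, ENNReal.ofReal (√(max (4 * δ ^ 2) |t - s|) ^ (-q)) ^ 2
      = ENNReal.ofReal (max (4 * δ ^ 2) ‖s - t‖ ^ (-q)) := fun s => by
    rw [← ENNReal.ofReal_pow (Real.rpow_nonneg (Real.sqrt_nonneg _) _),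
      Real.rpow_pow_comm (Real.sqrt_nonneg _), Real.sq_sqrt (by positivity),
      Real.norm_eq_abs, abs_sub_comm]
  simp_rw [hsq]
  rw [lintegral_max_norm_sub_rpow_neg volume t q (by positivity), Module.finrank_self,
    Nat.cast_one]

theorem setLIntegral_sq_le_of_le_sqrt_max_rpow_neg (g : ℝ → ℝ≥0∞) (S : Set ℝ) (t : ℝ)
    {δ : ℝ} (hδ : 0 < δ) (q : ℝ) (c : ℝ≥0∞)
    (hg : ∀ s ∈ S, g s ≤ c * ENNReal.ofReal (√(max (4 * δ ^ 2) |t - s|) ^ (-q))) :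
    ∫⁻ s in S, g s ^ 2
      ≤ c ^ 2 * (ENNReal.ofReal ((4 * δ ^ 2) ^ (1 - q))
        * truncPowIntegral (volume : Measure ℝ) q) := by
  calc ∫⁻ s in S, g s ^ 2
      ≤ ∫⁻ s in S, c ^ 2 * ENNReal.ofReal (√(max (4 * δ ^ 2) |t - s|) ^ (-q)) ^ 2 :=
        setLIntegral_mono (by fun_prop) fun s hs => by rw [← mul_pow]; gcongr; exact hg s hs
    _ ≤ ∫⁻ s, c ^ 2 * ENNReal.ofReal (√(max (4 * δ ^ 2) |t - s|) ^ (-q)) ^ 2 :=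
        setLIntegral_le_lintegral _ _
    _ = _ := by
        rw [lintegral_const_mul _ (by fun_prop), lintegral_ofReal_sqrt_max_rpow_neg_sq t hδ]

end ParabolicKernel

theorem ofReal_mul_rpow_sq_mul_le (A : ℝ) {δ ε : ℝ} (hδ : 0 < δ) (hε : 0 ≤ ε) :
    ENNReal.ofReal (A * δ ^ ε) ^ 2 * ENNReal.ofReal ((4 * δ ^ 2) ^ (-ε))
      ≤ ENNReal.ofReal A ^ 2 := by
  have hδε : (δ ^ ε) ^ 2 * (4 * δ ^ 2) ^ (-ε) = 4 ^ (-ε) := by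
    rw [Real.mul_rpow (by norm_num) (sq_nonneg δ), Real.rpow_neg (sq_nonneg δ),
      ← Real.rpow_pow_comm hδ.le, mul_left_comm, mul_inv_cancel₀ (by positivity), mul_one]
  have h4 : (4 : ℝ) ^ (-ε) ≤ 1 :=
    Real.rpow_le_one_of_one_le_of_nonpos (by norm_num) (neg_nonpos.2 hε)
  calc ENNReal.ofReal (A * δ ^ ε) ^ 2 * ENNReal.ofReal ((4 * δ ^ 2) ^ (-ε))
      = ENNReal.ofReal A ^ 2 * ENNReal.ofReal (4 ^ (-ε)) := by
        rw [ENNReal.ofReal_mul' (by positivity), mul_pow, mul_assoc,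
          ← ENNReal.ofReal_pow (Real.rpow_nonneg hδ.le ε),
          ← ENNReal.ofReal_mul (by positivity), hδε]
    _ ≤ ENNReal.ofReal A ^ 2 := mul_le_of_le_one_right' (ENNReal.ofReal_le_one.2 h4)

theorem statement19_general (d : ℕ) (ε : ℝ) (hε : 0 < ε) :
    ∃ C : ℝ, 0 < C ∧
      ∀ (T : ℝ≥0∞), 0 < T → ∀ (D : Set (Ed d)), MeasurableSet D →
      ∀ K : ℝ → ℝ → Ed d → Ed d → ℂ,
        Measurable (fun q : (ℝ × ℝ) × Ed d × Ed d => K q.1.1 q.1.2 q.2.1 q.2.2) →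
      ∀ A₀ : ℝ, 0 < A₀ →
      -- parabolic regularity hypothesis
      (∀ (t t' s : ℝ) (x x' y : Ed d),
        0 < t → ENNReal.ofReal t < T → 0 < t' → ENNReal.ofReal t' < T →
        0 < s → ENNReal.ofReal s < T → x ∈ D → x' ∈ D → y ∈ D →
        pnorm (t - t') (x - x') ≤ pnorm (t - s) (x - y) / 2 →
        ‖K t s x y - K t' s x' y‖ ≤
          A₀ * pnorm (t - t') (x - x') ^ ε / pnorm (t - s) (x - y) ^ (ε + (d:ℝ) + 1)) →
      -- conclusion
      ∀ (t t' : ℝ) (x x' : Ed d),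
        0 < t → ENNReal.ofReal t < T → 0 < t' → ENNReal.ofReal t' < T →
        x ∈ D → x' ∈ D →
        (∫⁻ s in {s : ℝ | 0 < s ∧ ENNReal.ofReal s < T},
            (∫⁻ y in {y : Ed d |
                y ∈ D ∧ pnorm (t - t') (x - x') ≤ pnorm (t - s) (x - y) / 2},
              (‖K t s x y - K t' s x' y‖₊ : ℝ≥0∞)) ^ (2:ℝ)) ^ ((1:ℝ)/2)
          ≤ ENNReal.ofReal (C * A₀) := by
  set p : ℝ := ε + d + 1
  set Φd := truncPowIntegral (volume : Measure (Ed d)) p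
  set Φ1 := truncPowIntegral (volume : Measure ℝ) (ε + 1)
  have hΦd : Φd < ∞ :=
    truncPowIntegral_lt_top _ (by rw [finrank_euclideanSpace_fin]; linarith)
  have hΦ1 : Φ1 < ∞ :=
    truncPowIntegral_lt_top _ (by rw [Module.finrank_self]; push_cast; linarith)
  have hC : Φd * Φ1 ^ (2⁻¹ : ℝ) ≠ ∞ := by finiteness
  have hC0 : Φd * Φ1 ^ (2⁻¹ : ℝ) ≠ 0 := mul_ne_zero (truncPowIntegral_pos _ p).ne'
    (ENNReal.rpow_pos (truncPowIntegral_pos _ _) hΦ1.ne).ne'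
  refine ⟨(Φd * Φ1 ^ (2⁻¹ : ℝ)).toReal, ENNReal.toReal_pos hC0 hC, ?_⟩
  intro T _ D _ K _ A₀ _ hreg t t' x x' ht htT ht' ht'T hx hx'
  rw [ENNReal.ofReal_mul ENNReal.toReal_nonneg, ENNReal.ofReal_toReal hC, one_div,
    ENNReal.rpow_inv_le_iff two_pos]
  simp_rw [ENNReal.rpow_two]
  set δ := pnorm (t - t') (x - x')
  rcases (pnorm_nonneg (t - t') (x - x')).eq_or_lt with hδ | hδ
  · obtain ⟨rfl, rfl⟩ : t = t' ∧ x = x' := by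
      simpa [sub_eq_zero] using pnorm_eq_zero_iff.1 hδ.symm
    simp
  have hslice : ∀ s ∈ {s : ℝ | 0 < s ∧ ENNReal.ofReal s < T},
      ∫⁻ y in {y | y ∈ D ∧ δ ≤ pnorm (t - s) (x - y) / 2},
          (‖K t s x y - K t' s x' y‖₊ : ℝ≥0∞)
        ≤ ENNReal.ofReal (A₀ * δ ^ ε) * Φd
          * ENNReal.ofReal (√(max (4 * δ ^ 2) |t - s|) ^ (-(ε + 1))) := by
    rintro s ⟨hs, hsT⟩
    calc _ ≤ ENNReal.ofReal (A₀ * δ ^ ε)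
          * (ENNReal.ofReal (√(max (4 * δ ^ 2) |t - s|) ^ ((d : ℝ) - p)) * Φd) :=
          setLIntegral_enorm_le_of_le_div_pnorm_rpow _ _ x (t - s) hδ (by positivity) fun y hy =>
            ⟨by linarith [hy.2], hreg t t' s x x' y ht htT ht' ht'T hs hsT hx hx' hy.1 hy.2⟩
      _ = _ := by rw [show (d : ℝ) - p = -(ε + 1) by ring]; ring
  calc _ ≤ (ENNReal.ofReal (A₀ * δ ^ ε) * Φd) ^ 2
        * (ENNReal.ofReal ((4 * δ ^ 2) ^ (1 - (ε + 1))) * Φ1) :=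
        setLIntegral_sq_le_of_le_sqrt_max_rpow_neg _ _ t hδ (ε + 1) _ hslice
    _ = ENNReal.ofReal (A₀ * δ ^ ε) ^ 2 * ENNReal.ofReal ((4 * δ ^ 2) ^ (-ε))
          * (Φd ^ 2 * Φ1) := by
        rw [show 1 - (ε + 1) = -ε by ring]; ring
    _ ≤ ENNReal.ofReal A₀ ^ 2 * (Φd ^ 2 * Φ1) := by
        gcongr; exact ofReal_mul_rpow_sq_mul_le A₀ hδ hε.le
    _ = _ := by
        rw [mul_pow, mul_pow, ← ENNReal.rpow_two (Φ1 ^ _), ENNReal.rpow_inv_rpow two_ne_zero]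
        ring

/-- parabolic Hörmander-type estimate. If a measurable kernel `K` on
`(0,T) × (0,T) × D × D` satisfies the parabolic `ε`-standard regularity estimate, then
the `L²`-in-time, `L¹`-in-space oscillation integral is bounded by `C(ε,d)·A₀`. -/
theorem statement19 (d : ℕ) (hd : 1 ≤ d) (ε : ℝ) (hε : 0 < ε) (hε1 : ε ≤ 1) :
    ∃ C : ℝ, 0 < C ∧
      ∀ (T : ℝ≥0∞), 0 < T → ∀ (D : Set (Ed d)), MeasurableSet D →
      ∀ K : ℝ → ℝ → Ed d → Ed d → ℂ,
        Measurable (fun q : (ℝ × ℝ) × Ed d × Ed d => K q.1.1 q.1.2 q.2.1 q.2.2) →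
      ∀ A₀ : ℝ, 0 < A₀ →
      -- parabolic regularity hypothesis
      (∀ (t t' s : ℝ) (x x' y : Ed d),
        0 < t → ENNReal.ofReal t < T → 0 < t' → ENNReal.ofReal t' < T →
        0 < s → ENNReal.ofReal s < T → x ∈ D → x' ∈ D → y ∈ D →
        pnorm (t - t') (x - x') ≤ pnorm (t - s) (x - y) / 2 →
        ‖K t s x y - K t' s x' y‖ ≤
          A₀ * pnorm (t - t') (x - x') ^ ε / pnorm (t - s) (x - y) ^ (ε + (d:ℝ) + 1)) →
      -- conclusion
      ∀ (t t' : ℝ) (x x' : Ed d),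
        0 < t → ENNReal.ofReal t < T → 0 < t' → ENNReal.ofReal t' < T →
        x ∈ D → x' ∈ D →
        (∫⁻ s in {s : ℝ | 0 < s ∧ ENNReal.ofReal s < T},
            (∫⁻ y in {y : Ed d |
                y ∈ D ∧ pnorm (t - t') (x - x') ≤ pnorm (t - s) (x - y) / 2},
              (‖K t s x y - K t' s x' y‖₊ : ℝ≥0∞)) ^ (2:ℝ)) ^ ((1:ℝ)/2)
          ≤ ENNReal.ofReal (C * A₀) :=
  statement19_general d ε hε
end
end
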